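/- arXiv:2501.18187 — 8 statements merged into one kernel-verified Lean document; each statement's English description precedes it below -/
import Mathlib

section
/- Let d, n, L ≥ 1, let Σ be a positive semidefinite d×d real matrix, and let f : ℝ^d → ℝ be a measurable function of at most polynomial growth (|f(x)| ≤ C(1+‖x‖)^k for some C, k). Draw x_1, …, x_{n+1} i.i.d. from the Gaussian N(0, Σ) on ℝ^d and set y_i = f(x_i). Form the prompt Z ∈ ℝ^{(D+1)×(n+1)} with D ≥ d+1, whose i-th column is ((1, x_i, 0_{D−d−1}), y_i) for i ≤ n and whose last column is ((1, x_{n+1}, 0_{D−d−1}), 0). Then for every L-layer linear Transformer with arbitrary weights (P^(ℓ), Q^(ℓ))_{ℓ=1}^L, its prediction ŷ (the (D+1, n+1) entry of the output Z^(L)) satisfies E[(ŷ + f(x_{n+1}))²] ≥ inf_{α ∈ ℝ, β ∈ ℝ^d} E[(⟨x_{n+1}, β⟩ + α + f(x_{n+1}))²]. -/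
/-!
Masking the last column makes the context part `Z M` of every layer's input evolve on its own,
while the last column is multiplied by a matrix that depends only on `Z M`. Hence the prediction
is an affine function `⟨x_{n+1}, β⟩ + α` of the query whose coefficients depend on the context
`x_1, …, x_n` alone. As the query is independent of the context, conditioning on the context
(Fubini) bounds the risk below by the risk of the best fixed affine predictor. Fubini applies
because the squared error grows polynomially and Gaussian measures have moments of all orders.
-/

open MeasureTheory ProbabilityTheory Matrix

noncomputable section

/-- Product of i.i.d. standard Gaussians on `ℝ^d`. -/
def stdGaussianPi (d : ℕ) : Measure (Fin d → ℝ) :=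
  Measure.pi fun _ => gaussianReal 0 1

/-- The mask `M = diag(I_n, 0)`. -/
def attnMask (n : ℕ) : Matrix (Fin (n + 1)) (Fin (n + 1)) ℝ :=
  Matrix.diagonal fun i => if i = Fin.last n then 0 else 1

/-- A linear self-attention layer with weights `P, Q`:
`attn(Z) = Z + (1/n) P Z M (Zᵀ Q Z)`. -/
def attn (D n : ℕ) (P Q : Matrix (Fin (D + 1)) (Fin (D + 1)) ℝ)
    (Z : Matrix (Fin (D + 1)) (Fin (n + 1)) ℝ) : Matrix (Fin (D + 1)) (Fin (n + 1)) ℝ :=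
  Z + (n : ℝ)⁻¹ • (P * Z * attnMask n * (Zᵀ * Q * Z))

/-- An `L`-layer linear Transformer: composition of LSA layers, weights given as a list. -/
def TFlin (D n : ℕ)
    (wts : List (Matrix (Fin (D + 1)) (Fin (D + 1)) ℝ × Matrix (Fin (D + 1)) (Fin (D + 1)) ℝ))
    (Z : Matrix (Fin (D + 1)) (Fin (n + 1)) ℝ) : Matrix (Fin (D + 1)) (Fin (n + 1)) ℝ :=
  wts.foldl (fun W pq => attn D n pq.1 pq.2 W) Z

/-- The prompt matrix: column `i ≤ n` is `((1, x_i, 0_{D-d-1}), y_i)`, and the last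
column is `((1, x_{n+1}, 0_{D-d-1}), 0)`. -/
def promptX (d D n : ℕ) (x : Fin (n + 1) → Fin d → ℝ) (y : Fin n → ℝ) :
    Matrix (Fin (D + 1)) (Fin (n + 1)) ℝ :=
  Matrix.of fun i j =>
    if h0 : (i : ℕ) = 0 then 1
    else if h1 : (i : ℕ) ≤ d then x j ⟨(i : ℕ) - 1, by omega⟩
    else if (i : ℕ) = D then (if hj : (j : ℕ) < n then y ⟨(j : ℕ), hj⟩ else 0)
    else 0

namespace LinearTransformer

variable {d D n : ℕ}

lemma attnMask_mul_attnMask_mul {m : Type*} (X : Matrix (Fin (n + 1)) m ℝ) :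
    attnMask n * (attnMask n * X) = attnMask n * X := by
  rw [← Matrix.mul_assoc, attnMask, diagonal_mul_diagonal]
  congr 2; ext i; split_ifs <;> simp

lemma attnMask_transpose : (attnMask n)ᵀ = attnMask n := diagonal_transpose _

lemma attn_mul_attnMask (P Q : Matrix (Fin (D + 1)) (Fin (D + 1)) ℝ)
    (Z : Matrix (Fin (D + 1)) (Fin (n + 1)) ℝ) :
    attn D n P Q Z * attnMask n = Z * attnMask n +
      (n : ℝ)⁻¹ • (P * (Z * attnMask n) * (Z * attnMask n)ᵀ * Q * (Z * attnMask n)) := by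
  rw [attn, Matrix.add_mul, Matrix.smul_mul]
  simp only [transpose_mul, attnMask_transpose, Matrix.mul_assoc, attnMask_mul_attnMask_mul]

lemma attn_transpose_last (P Q : Matrix (Fin (D + 1)) (Fin (D + 1)) ℝ)
    (Z : Matrix (Fin (D + 1)) (Fin (n + 1)) ℝ) :
    (attn D n P Q Z)ᵀ (Fin.last n) =
      (1 + (n : ℝ)⁻¹ • (P * (Z * attnMask n) * (Z * attnMask n)ᵀ * Q)) *ᵥ Zᵀ (Fin.last n) := by
  have h : P * Z * attnMask n * (Zᵀ * Q * Z) =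
      P * (Z * attnMask n) * (Z * attnMask n)ᵀ * Q * Z := by
    simp only [transpose_mul, attnMask_transpose, Matrix.mul_assoc, attnMask_mul_attnMask_mul]
  rw [attn, h]
  ext i
  simp only [transpose_apply, Matrix.add_apply, Matrix.smul_apply, Matrix.add_mulVec,
    one_mulVec, smul_mulVec, Pi.add_apply, Pi.smul_apply]
  rfl

theorem exists_TFlin_transpose_last_eq_mulVec
    (l : List (Matrix (Fin (D + 1)) (Fin (D + 1)) ℝ × Matrix (Fin (D + 1)) (Fin (D + 1)) ℝ))
    (W : Matrix (Fin (D + 1)) (Fin (n + 1)) ℝ) :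
    ∃ G : Matrix (Fin (D + 1)) (Fin (D + 1)) ℝ, ∀ Z, Z * attnMask n = W →
      (TFlin D n l Z)ᵀ (Fin.last n) = G *ᵥ Zᵀ (Fin.last n) := by
  induction l generalizing W with
  | nil => exact ⟨1, fun Z _ => by simp [TFlin]⟩
  | cons pq l ih =>
    obtain ⟨G, hG⟩ := ih (W + (n : ℝ)⁻¹ • (pq.1 * W * Wᵀ * pq.2 * W))
    refine ⟨G * (1 + (n : ℝ)⁻¹ • (pq.1 * W * Wᵀ * pq.2)), fun Z hZ => ?_⟩
    have hstep : attn D n pq.1 pq.2 Z * attnMask n =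
        W + (n : ℝ)⁻¹ • (pq.1 * W * Wᵀ * pq.2 * W) := by
      rw [attn_mul_attnMask, hZ]
    change (TFlin D n l (attn D n pq.1 pq.2 Z))ᵀ (Fin.last n) = _
    rw [hG _ hstep, attn_transpose_last, hZ, mulVec_mulVec]

lemma promptX_snoc_mul_attnMask (u : Fin n → Fin d → ℝ) (y : Fin d → ℝ) (c : Fin n → ℝ) :
    promptX d D n (Fin.snoc u y) c * attnMask n =
      promptX d D n (Fin.snoc u 0) c * attnMask n := by
  ext i j
  simp only [attnMask, mul_diagonal]
  cases j using Fin.lastCases with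
  | last => simp
  | cast j => simp [promptX]

def queryEmbedding (d D : ℕ) : Matrix (Fin (D + 1)) (Fin d) ℝ :=
  Matrix.of fun r j => if (r : ℕ) = j + 1 then 1 else 0

lemma promptX_transpose_last (x : Fin (n + 1) → Fin d → ℝ) (c : Fin n → ℝ) :
    (promptX d D n x c)ᵀ (Fin.last n) =
      Pi.single 0 1 + queryEmbedding d D *ᵥ x (Fin.last n) := by
  ext r
  simp only [promptX, Fin.val_eq_zero_iff, transpose_apply, of_apply, Fin.val_last,
    lt_self_iff_false, ↓reduceDIte, ite_self, queryEmbedding, Pi.add_apply, Pi.single_apply,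
    mulVec, dotProduct, ite_mul, one_mul, zero_mul]
  split_ifs with h0 h1
  · simp [h0]
  all_goals replace h0 : (r : ℕ) ≠ 0 := fun h => h0 (Fin.ext h)
  · rw [zero_add, Finset.sum_eq_single ⟨r - 1, by omega⟩]
    · rw [if_pos (by simp only; omega)]
    · exact fun i _ hi => if_neg fun h => hi (Fin.ext (by simp only; omega))
    · simp
  · rw [zero_add, Finset.sum_eq_zero fun i _ => if_neg (by omega)]

theorem exists_TFlin_promptX_snoc_eq_dotProduct_add
    (l : List (Matrix (Fin (D + 1)) (Fin (D + 1)) ℝ × Matrix (Fin (D + 1)) (Fin (D + 1)) ℝ))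
    (u : Fin n → Fin d → ℝ) (c : Fin n → ℝ) :
    ∃ (α : ℝ) (β : Fin d → ℝ), ∀ y,
      TFlin D n l (promptX d D n (Fin.snoc u y) c) (Fin.last D) (Fin.last n) = y ⬝ᵥ β + α := by
  obtain ⟨G, hG⟩ :=
    exists_TFlin_transpose_last_eq_mulVec l (promptX d D n (Fin.snoc u 0) c * attnMask n)
  refine ⟨(G *ᵥ Pi.single 0 1) (Fin.last D), (G * queryEmbedding d D) (Fin.last D), fun y => ?_⟩
  have hy := congrFun (hG _ (promptX_snoc_mul_attnMask u y c)) (Fin.last D)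
  rw [transpose_apply] at hy
  rw [hy, promptX_transpose_last, mulVec_add, mulVec_mulVec, Pi.add_apply, add_comm,
    Fin.snoc_last, dotProduct_comm]
  rfl

end LinearTransformer

open Asymptotics

lemma isBigO_one_add_norm_pow_of_le {X : Type*} [NormedAddCommGroup X] {m m' : ℕ}
    (hm : m ≤ m') : (fun x : X => (1 + ‖x‖) ^ m) =O[⊤] fun x => (1 + ‖x‖) ^ m' :=
  isBigO_top.2 ⟨1, fun x => by
    rw [one_mul, Real.norm_of_nonneg (by positivity), Real.norm_of_nonneg (by positivity)]
    exact pow_le_pow_right₀ (le_add_of_nonneg_right (norm_nonneg x)) hm⟩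

def MeasurablePolyGrowth {X : Type*} [MeasurableSpace X] [Norm X] (h : X → ℝ) : Prop :=
  Measurable h ∧ ∃ m : ℕ, h =O[⊤] fun x => (1 + ‖x‖) ^ m

namespace MeasurablePolyGrowth

variable {X Y : Type*} [MeasurableSpace X] [NormedAddCommGroup X]
  [MeasurableSpace Y] [NormedAddCommGroup Y] {g h : X → ℝ}

lemma of_abs_le (hm : Measurable h) (C : ℝ) (m : ℕ) (hC : ∀ x, |h x| ≤ C * (1 + ‖x‖) ^ m) :
    MeasurablePolyGrowth h :=
  ⟨hm, m, isBigO_top.2 ⟨C, fun x => by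
    rw [Real.norm_eq_abs, Real.norm_of_nonneg (by positivity)]; exact hC x⟩⟩

lemma const (a : ℝ) : MeasurablePolyGrowth fun _ : X => a :=
  of_abs_le measurable_const |a| 0 fun _ => by simp

lemma add (hg : MeasurablePolyGrowth g) (hh : MeasurablePolyGrowth h) :
    MeasurablePolyGrowth fun x => g x + h x := by
  obtain ⟨hgm, a, hga⟩ := hg
  obtain ⟨hhm, b, hhb⟩ := hh
  exact ⟨hgm.add hhm, max a b,
    (hga.trans (isBigO_one_add_norm_pow_of_le (le_max_left a b))).add
      (hhb.trans (isBigO_one_add_norm_pow_of_le (le_max_right a b)))⟩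

lemma mul (hg : MeasurablePolyGrowth g) (hh : MeasurablePolyGrowth h) :
    MeasurablePolyGrowth fun x => g x * h x := by
  obtain ⟨hgm, a, hga⟩ := hg
  obtain ⟨hhm, b, hhb⟩ := hh
  exact ⟨hgm.mul hhm, a + b, by simpa only [pow_add] using hga.mul hhb⟩

lemma sum {ι : Type*} (s : Finset ι) {h : ι → X → ℝ}
    (hh : ∀ i ∈ s, MeasurablePolyGrowth (h i)) :
    MeasurablePolyGrowth fun x => ∑ i ∈ s, h i x := by
  classical
  induction s using Finset.induction_on with
  | empty => simpa using const 0
  | insert i s hi ih =>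
    simp only [Finset.sum_insert hi]
    exact (hh i (s.mem_insert_self i)).add (ih fun j hj => hh j (Finset.mem_insert_of_mem hj))

lemma comp_of_norm_le {h : Y → ℝ} (hh : MeasurablePolyGrowth h) {φ : X → Y}
    (hφ : Measurable φ) (hφle : ∀ x, ‖φ x‖ ≤ ‖x‖) : MeasurablePolyGrowth fun x => h (φ x) := by
  obtain ⟨hm, m, hO⟩ := hh
  refine ⟨hm.comp hφ, m,
    (hO.comp_tendsto Filter.tendsto_top).trans (isBigO_top.2 ⟨1, fun x => ?_⟩)⟩
  rw [Function.comp_apply, one_mul, Real.norm_of_nonneg (by positivity),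
    Real.norm_of_nonneg (by positivity)]
  gcongr
  exact hφle x

lemma apply {ι : Type*} [Fintype ι] (i : ι) : MeasurablePolyGrowth fun v : ι → ℝ => v i :=
  of_abs_le (measurable_pi_apply i) 1 1 fun v => by
    rw [one_mul, pow_one, ← Real.norm_eq_abs]
    exact (norm_le_pi_norm v i).trans (le_add_of_nonneg_left zero_le_one)

lemma integrable {μ : Measure X} [IsFiniteMeasure μ] (hh : MeasurablePolyGrowth h)
    (hμ : ∀ p : ENNReal, p ≠ ⊤ → MemLp id p μ) : Integrable h μ := by
  obtain ⟨hm, m, hO⟩ := hh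
  refine hO.integrable hm.aestronglyMeasurable ?_
  have hnorm : MemLp (fun x : X => ‖x‖) m μ := (hμ m (ENNReal.natCast_ne_top m)).norm
  have hw : MemLp (fun x => 1 + ‖x‖) m μ := (memLp_const (1 : ℝ)).add hnorm
  refine hw.integrable_norm_pow'.congr (ae_of_all _ fun x => ?_)
  simp only [Real.norm_of_nonneg (by positivity : (0 : ℝ) ≤ 1 + ‖x‖)]

lemma matrix_mul {I J K : Type*} [Fintype J] {A : X → Matrix I J ℝ} {B : X → Matrix J K ℝ}
    (hA : ∀ i j, MeasurablePolyGrowth fun x => A x i j)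
    (hB : ∀ j k, MeasurablePolyGrowth fun x => B x j k) (i : I) (k : K) :
    MeasurablePolyGrowth fun x => (A x * B x) i k := by
  simpa only [Matrix.mul_apply] using sum Finset.univ fun j _ => (hA i j).mul (hB j k)

lemma attn {D n : ℕ} (P Q : Matrix (Fin (D + 1)) (Fin (D + 1)) ℝ)
    {W : X → Matrix (Fin (D + 1)) (Fin (n + 1)) ℝ}
    (hW : ∀ i j, MeasurablePolyGrowth fun x => W x i j) (i : Fin (D + 1)) (j : Fin (n + 1)) :
    MeasurablePolyGrowth fun x => attn D n P Q (W x) i j := by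
  have hPWM : ∀ i j, MeasurablePolyGrowth fun x => (P * W x * attnMask n) i j :=
    matrix_mul (matrix_mul (fun _ _ => const _) hW) fun _ _ => const _
  have hWQW : ∀ i j, MeasurablePolyGrowth fun x => ((W x)ᵀ * Q * W x) i j :=
    matrix_mul (matrix_mul (fun i j => hW j i) fun _ _ => const _) hW
  simp only [_root_.attn, Matrix.add_apply, Matrix.smul_apply, smul_eq_mul]
  exact (hW i j).add ((const _).mul (matrix_mul hPWM hWQW i j))

lemma TFlin {D n : ℕ}
    (l : List (Matrix (Fin (D + 1)) (Fin (D + 1)) ℝ × Matrix (Fin (D + 1)) (Fin (D + 1)) ℝ))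
    {W : X → Matrix (Fin (D + 1)) (Fin (n + 1)) ℝ}
    (hW : ∀ i j, MeasurablePolyGrowth fun x => W x i j) (i : Fin (D + 1)) (j : Fin (n + 1)) :
    MeasurablePolyGrowth fun x => TFlin D n l (W x) i j := by
  induction l generalizing W with
  | nil => exact hW i j
  | cons pq l ih => exact ih (attn pq.1 pq.2 hW)

lemma promptX {d D n : ℕ} {f : (Fin d → ℝ) → ℝ} (hf : MeasurablePolyGrowth f)
    (i : Fin (D + 1)) (j : Fin (n + 1)) :
    MeasurablePolyGrowth fun x : Fin (n + 1) → Fin d → ℝ =>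
      promptX d D n x (fun k => f (x k.castSucc)) i j := by
  have hx (k : Fin (n + 1)) {h : (Fin d → ℝ) → ℝ} (hh : MeasurablePolyGrowth h) :
      MeasurablePolyGrowth fun x : Fin (n + 1) → Fin d → ℝ => h (x k) :=
    hh.comp_of_norm_le (measurable_pi_apply k) fun x => norm_le_pi_norm x k
  simp only [_root_.promptX, Matrix.of_apply]
  split_ifs
  · exact const 1
  · exact hx j (apply _)
  · exact hx _ hf
  · exact const 0
  · exact const 0

end MeasurablePolyGrowth

lemma memLp_id_pi {ι E : Type*} [Fintype ι] [NormedAddCommGroup E] [MeasurableSpace E]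
    {μ : Measure E} [IsProbabilityMeasure μ] {p : ENNReal} (h : MemLp id p μ) :
    MemLp id p (Measure.pi fun _ : ι => μ) :=
  memLp_pi_iff.2 fun i => h.comp_measurePreserving (measurePreserving_eval _ i)

instance {d : ℕ} : IsProbabilityMeasure (stdGaussianPi d) := by
  unfold stdGaussianPi; infer_instance

lemma memLp_id_map_mulVec_stdGaussianPi {d : ℕ} (A : Matrix (Fin d) (Fin d) ℝ) (p : ENNReal)
    (hp : p ≠ ⊤) : MemLp id p ((stdGaussianPi d).map A.mulVec) := by
  have hA : Continuous A.mulVec := continuous_const.matrix_mulVec continuous_id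
  rw [memLp_map_measure_iff aestronglyMeasurable_id hA.aemeasurable]
  exact (Matrix.toLin' A).toContinuousLinearMap.lipschitz.comp_memLp (map_zero _)
    (memLp_id_pi (memLp_id_gaussianReal' p hp))

lemma le_integral_pi_of_le_integral_snoc {X : Type*} [MeasurableSpace X] {μ : Measure X}
    [IsProbabilityMeasure μ] {n : ℕ} {H : (Fin (n + 1) → X) → ℝ}
    (hH : Integrable H (Measure.pi fun _ => μ)) {c : ℝ}
    (hc : ∀ u : Fin n → X, c ≤ ∫ y, H (Fin.snoc u y) ∂μ) :
    c ≤ ∫ x, H x ∂(Measure.pi fun _ => μ) := by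
  set e := (MeasurableEquiv.piFinSuccAbove (fun _ => X) (Fin.last n)).symm
  have he : MeasurePreserving e (μ.prod (Measure.pi fun _ => μ)) (Measure.pi fun _ => μ) :=
    (measurePreserving_piFinSuccAbove (fun _ => μ) (Fin.last n)).symm
  have he_apply (p : X × (Fin n → X)) : e p = Fin.snoc p.2 p.1 := Fin.insertNth_last' _ _
  have hH' : Integrable (fun p => H (e p)) (μ.prod (Measure.pi fun _ => μ)) :=
    (he.integrable_comp_emb e.measurableEmbedding).2 hH
  rw [← he.integral_comp e.measurableEmbedding, integral_prod_symm _ hH']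
  calc c = ∫ _ : Fin n → X, c ∂(Measure.pi fun _ => μ) := by simp
    _ ≤ _ := integral_mono (integrable_const c) hH'.integral_prod_right fun u => by
      simpa only [he_apply] using hc u

lemma ciInf₂_le_of_nonneg {ι κ : Type*} {F : ι → κ → ℝ} (hF : ∀ i k, 0 ≤ F i k)
    (i : ι) (k : κ) : ⨅ i, ⨅ k, F i k ≤ F i k :=
  (ciInf_le ⟨0, by rintro _ ⟨i, rfl⟩; exact Real.iInf_nonneg (hF i)⟩ i).trans
    (ciInf_le ⟨0, by rintro _ ⟨k, rfl⟩; exact hF i k⟩ k)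

theorem iInf_integral_affine_le_integral_TFlin {d D n : ℕ} {μ : Measure (Fin d → ℝ)}
    [IsProbabilityMeasure μ] (hμ : ∀ p : ENNReal, p ≠ ⊤ → MemLp id p μ)
    {f : (Fin d → ℝ) → ℝ} (hf : MeasurablePolyGrowth f)
    (l : List (Matrix (Fin (D + 1)) (Fin (D + 1)) ℝ × Matrix (Fin (D + 1)) (Fin (D + 1)) ℝ)) :
    ⨅ α : ℝ, ⨅ β : Fin d → ℝ,
        ∫ x, (x (Fin.last n) ⬝ᵥ β + α + f (x (Fin.last n))) ^ 2 ∂(Measure.pi fun _ => μ)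
      ≤ ∫ x, (TFlin D n l (promptX d D n x fun i => f (x i.castSucc)) (Fin.last D) (Fin.last n)
            + f (x (Fin.last n))) ^ 2 ∂(Measure.pi fun _ => μ) := by
  have herr : MeasurablePolyGrowth fun x : Fin (n + 1) → Fin d → ℝ =>
      TFlin D n l (promptX d D n x fun i => f (x i.castSucc)) (Fin.last D) (Fin.last n)
        + f (x (Fin.last n)) :=
    (MeasurablePolyGrowth.TFlin l (MeasurablePolyGrowth.promptX hf) _ _).add
      (hf.comp_of_norm_le (measurable_pi_apply _) fun x => norm_le_pi_norm x _)
  have hint := (herr.mul herr).integrable fun p hp => memLp_id_pi (hμ p hp)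
  simp only [← sq] at hint
  refine le_integral_pi_of_le_integral_snoc hint fun u => ?_
  obtain ⟨α, β, hpred⟩ :=
    LinearTransformer.exists_TFlin_promptX_snoc_eq_dotProduct_add l u fun i => f (u i)
  have hm : Measurable fun y : Fin d → ℝ => (y ⬝ᵥ β + α + f y) ^ 2 :=
    (((continuous_id.dotProduct continuous_const).measurable.add_const α).add hf.1).pow_const 2
  calc _ ≤ ∫ x : Fin (n + 1) → Fin d → ℝ, (x (Fin.last n) ⬝ᵥ β + α + f (x (Fin.last n))) ^ 2
          ∂(Measure.pi fun _ => μ) :=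
        ciInf₂_le_of_nonneg (fun _ _ => integral_nonneg fun _ => sq_nonneg _) α β
    _ = ∫ y, (y ⬝ᵥ β + α + f y) ^ 2 ∂μ :=
        integral_comp_eval (X := fun _ => Fin d → ℝ) (μ := fun _ => μ) (i := Fin.last n)
          (f := fun y => (y ⬝ᵥ β + α + f y) ^ 2) hm.aestronglyMeasurable
    _ = _ := by simp [hpred]

theorem stmt0_general (d n L D : ℕ)
    (A : Matrix (Fin d) (Fin d) ℝ)
    (f : (Fin d → ℝ) → ℝ) (hf : Measurable f)
    (C : ℝ) (k : ℕ) (hgrowth : ∀ x, |f x| ≤ C * (1 + ‖x‖) ^ k)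
    (wts : Fin L → Matrix (Fin (D + 1)) (Fin (D + 1)) ℝ × Matrix (Fin (D + 1)) (Fin (D + 1)) ℝ) :
    (⨅ α : ℝ, ⨅ β : Fin d → ℝ,
        ∫ x : Fin (n + 1) → Fin d → ℝ,
          ((x (Fin.last n) ⬝ᵥ β) + α + f (x (Fin.last n))) ^ 2
          ∂(Measure.pi fun _ : Fin (n + 1) => (stdGaussianPi d).map A.mulVec))
      ≤ ∫ x : Fin (n + 1) → Fin d → ℝ,
          (TFlin D n (List.ofFn wts)
              (promptX d D n x fun i => f (x i.castSucc)) (Fin.last D) (Fin.last n)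
            + f (x (Fin.last n))) ^ 2
          ∂(Measure.pi fun _ : Fin (n + 1) => (stdGaussianPi d).map A.mulVec) := by
  have : IsProbabilityMeasure ((stdGaussianPi d).map A.mulVec) :=
    Measure.isProbabilityMeasure_map (continuous_const.matrix_mulVec continuous_id).aemeasurable
  exact iInf_integral_affine_le_integral_TFlin (memLp_id_map_mulVec_stdGaussianPi A)
    (.of_abs_le hf C k hgrowth) _

/-- no deep linear Transformer beats the best linear predictor on
prompts whose labels are given by a fixed (possibly nonlinear) target function,
with inputs drawn i.i.d. from a Gaussian `N(0, Σ)` (realized as the pushforward of a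
standard Gaussian under `z ↦ A z`, where `A Aᵀ = Σ`). -/
theorem stmt0 (d n L D : ℕ) (hd : 1 ≤ d) (hn : 1 ≤ n) (hL : 1 ≤ L) (hD : d + 1 ≤ D)
    (Sig : Matrix (Fin d) (Fin d) ℝ) (hSig : Sig.PosSemidef)
    (A : Matrix (Fin d) (Fin d) ℝ) (hA : A * Aᵀ = Sig)
    (f : (Fin d → ℝ) → ℝ) (hf : Measurable f)
    (C : ℝ) (k : ℕ) (hgrowth : ∀ x, |f x| ≤ C * (1 + ‖x‖) ^ k)
    (wts : Fin L → Matrix (Fin (D + 1)) (Fin (D + 1)) ℝ × Matrix (Fin (D + 1)) (Fin (D + 1)) ℝ) :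
    (⨅ α : ℝ, ⨅ β : Fin d → ℝ,
        ∫ x : Fin (n + 1) → Fin d → ℝ,
          ((x (Fin.last n) ⬝ᵥ β) + α + f (x (Fin.last n))) ^ 2
          ∂(Measure.pi fun _ : Fin (n + 1) => (stdGaussianPi d).map A.mulVec))
      ≤ ∫ x : Fin (n + 1) → Fin d → ℝ,
          (TFlin D n (List.ofFn wts)
              (promptX d D n x fun i => f (x i.castSucc)) (Fin.last D) (Fin.last n)
            + f (x (Fin.last n))) ^ 2
          ∂(Measure.pi fun _ : Fin (n + 1) => (stdGaussianPi d).map A.mulVec) :=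
  stmt0_general d n L D A f hf C k hgrowth wts
end
end

section
/- Let D, n, L ≥ 1, let 𝒟_U be a probability distribution on ℝ^D all of whose moments are finite, and let g : ℝ^D → ℝ be measurable of at most polynomial growth. Draw u_1, …, u_{n+1} i.i.d. from 𝒟_U and set v_i = g(u_i). Form the prompt ζ ∈ ℝ^{(D+1)×(n+1)} whose i-th column is (u_i, v_i) for i ≤ n and whose last column is (u_{n+1}, 0). Then for every L-layer linear Transformer with arbitrary weights, its prediction v̂ (the (D+1, n+1) entry of the output ζ^(L)) satisfies E[(v̂ + v_{n+1})²] ≥ inf_{β ∈ ℝ^D} E[(⟨u_{n+1}, β⟩ + v_{n+1})²]. -/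
open MeasureTheory ProbabilityTheory Matrix

noncomputable section

/-- Prompt whose `i`-th column is `(u_i, v_i)` for `i ≤ n` and last column `(u_{n+1}, 0)`. -/
def promptU (D n : ℕ) (u : Fin (n + 1) → Fin D → ℝ) (v : Fin n → ℝ) :
    Matrix (Fin (D + 1)) (Fin (n + 1)) ℝ :=
  Matrix.of fun i j =>
    if hi : (i : ℕ) < D then u j ⟨(i : ℕ), hi⟩
    else if hj : (j : ℕ) < n then v ⟨(j : ℕ), hj⟩ else 0

open scoped ENNReal NNReal

/-!
Each layer acts as `Z ↦ (1 + n⁻¹ P (ZM)(ZM)ᵀ Q) Z`, and since `M² = M` the masked prompt `ZM`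
evolves by the same left multiplication. Hence the network is `Z ↦ G(ZM) Z` and, the query label
being `0`, the prediction is `⟪u_{n+1}, β⟫` with `β` a function of the context `u_1, …, u_n`
alone. As `u_{n+1}` is independent of the context, Fubini writes the risk as an average, over the
context, of risks of linear predictors `β`, each at least their infimum.

The entries of `G(ZM)` are polynomials in the `u_i` and `g(u_i)`, which lie in every `Lᵖ`; this
makes the risk integrable, so that its Bochner integral is not the junk value `0`.
-/

section Algebra

variable {D n : ℕ}

def attnFactor (P Q : Matrix (Fin (D + 1)) (Fin (D + 1)) ℝ)
    (Y : Matrix (Fin (D + 1)) (Fin (n + 1)) ℝ) : Matrix (Fin (D + 1)) (Fin (D + 1)) ℝ :=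
  1 + (n : ℝ)⁻¹ • (P * Y * Yᵀ * Q)

def TFlinFactor :
    List (Matrix (Fin (D + 1)) (Fin (D + 1)) ℝ × Matrix (Fin (D + 1)) (Fin (D + 1)) ℝ) →
    Matrix (Fin (D + 1)) (Fin (n + 1)) ℝ → Matrix (Fin (D + 1)) (Fin (D + 1)) ℝ
  | [], _ => 1
  | pq :: rest, Y => TFlinFactor rest (attnFactor pq.1 pq.2 Y * Y) * attnFactor pq.1 pq.2 Y

lemma attnMask_mul_self (n : ℕ) : attnMask n * attnMask n = attnMask n := by
  simp only [attnMask, diagonal_mul_diagonal]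
  congr 1
  ext i
  split_ifs <;> simp

lemma attn_eq_attnFactor_mul (P Q : Matrix (Fin (D + 1)) (Fin (D + 1)) ℝ)
    (Z : Matrix (Fin (D + 1)) (Fin (n + 1)) ℝ) :
    attn D n P Q Z = attnFactor P Q (Z * attnMask n) * Z := by
  have hM : (attnMask n)ᵀ = attnMask n := by simp [attnMask]
  rw [attn, attnFactor, Matrix.add_mul, Matrix.one_mul, Matrix.smul_mul, Matrix.transpose_mul,
    hM]
  simp only [Matrix.mul_assoc]
  rw [← Matrix.mul_assoc (attnMask n) (attnMask n), attnMask_mul_self]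

lemma TFlin_eq_TFlinFactor_mul
    (l : List (Matrix (Fin (D + 1)) (Fin (D + 1)) ℝ × Matrix (Fin (D + 1)) (Fin (D + 1)) ℝ))
    (Z : Matrix (Fin (D + 1)) (Fin (n + 1)) ℝ) :
    TFlin D n l Z = TFlinFactor l (Z * attnMask n) * Z := by
  induction l generalizing Z with
  | nil => simp [TFlin, TFlinFactor]
  | cons pq rest ih =>
    change TFlin D n rest (attn D n pq.1 pq.2 Z) = _
    rw [ih, attn_eq_attnFactor_mul, Matrix.mul_assoc _ Z, TFlinFactor, Matrix.mul_assoc]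

def maskedPrompt (w : Fin n → Fin D → ℝ) (v : Fin n → ℝ) : Matrix (Fin (D + 1)) (Fin (n + 1)) ℝ :=
  Matrix.of fun i j => Fin.lastCases 0 (fun j => Fin.lastCases (v j) (w j) i) j

lemma promptU_mul_attnMask (u : Fin (n + 1) → Fin D → ℝ) (v : Fin n → ℝ) :
    promptU D n u v * attnMask n = maskedPrompt (Fin.init u) v := by
  ext i j
  rw [attnMask, mul_diagonal]
  induction j using Fin.lastCases <;> induction i using Fin.lastCases <;>
    simp [promptU, maskedPrompt, Fin.init]

def TFlinCoeff
    (l : List (Matrix (Fin (D + 1)) (Fin (D + 1)) ℝ × Matrix (Fin (D + 1)) (Fin (D + 1)) ℝ))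
    (Y : Matrix (Fin (D + 1)) (Fin (n + 1)) ℝ) : Fin D → ℝ :=
  fun i => TFlinFactor l Y (Fin.last D) i.castSucc

lemma TFlin_promptU_apply_last
    (l : List (Matrix (Fin (D + 1)) (Fin (D + 1)) ℝ × Matrix (Fin (D + 1)) (Fin (D + 1)) ℝ))
    (u : Fin (n + 1) → Fin D → ℝ) (v : Fin n → ℝ) :
    TFlin D n l (promptU D n u v) (Fin.last D) (Fin.last n)
      = u (Fin.last n) ⬝ᵥ TFlinCoeff l (maskedPrompt (Fin.init u) v) := by
  rw [TFlin_eq_TFlinFactor_mul, promptU_mul_attnMask, mul_apply, Fin.sum_univ_castSucc]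
  simp [promptU, TFlinCoeff, dotProduct, mul_comm]

end Algebra

section AllMoments

variable {α : Type*} [MeasurableSpace α] {μ : Measure α} {f g : α → ℝ}

def MemLpAll (f : α → ℝ) (μ : Measure α) : Prop :=
  ∀ p : ℝ≥0, MemLp f p μ

namespace MemLpAll

lemma const [IsFiniteMeasure μ] (c : ℝ) : MemLpAll (fun _ => c) μ :=
  fun _ => memLp_const c

lemma add (hf : MemLpAll f μ) (hg : MemLpAll g μ) : MemLpAll (fun x => f x + g x) μ :=
  fun p => (hf p).add (hg p)

lemma mul (hf : MemLpAll f μ) (hg : MemLpAll g μ) : MemLpAll (fun x => f x * g x) μ := by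
  intro p
  have : ENNReal.HolderTriple (2 * p) (2 * p) p := by
    constructor
    rw [ENNReal.mul_inv (by simp) (by simp), ← add_mul, ENNReal.inv_two_add_inv_two, one_mul]
  have h2p : ((2 * p : ℝ≥0) : ℝ≥0∞) = 2 * p := by push_cast; rfl
  exact (h2p ▸ hg (2 * p)).mul' (h2p ▸ hf (2 * p))

lemma pow (hf : MemLpAll f μ) [IsFiniteMeasure μ] (k : ℕ) : MemLpAll (fun x => f x ^ k) μ := by
  induction k with
  | zero => simpa using const (μ := μ) 1
  | succ k ih => simpa only [pow_succ] using ih.mul hf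

lemma sum {ι : Type*} (s : Finset ι) {f : ι → α → ℝ} (hf : ∀ i ∈ s, MemLpAll (f i) μ) :
    MemLpAll (fun x => ∑ i ∈ s, f i x) μ :=
  fun p => memLp_finsetSum s fun i hi => hf i hi p

lemma of_abs_le (hg : MemLpAll g μ) (hf : AEStronglyMeasurable f μ) (hfg : ∀ x, |f x| ≤ g x) :
    MemLpAll f μ :=
  fun p => (hg p).mono' hf (ae_of_all _ hfg)

lemma comp_measurePreserving {β : Type*} [MeasurableSpace β] {ν : Measure β} {φ : β → α}
    (hf : MemLpAll f μ) (hφ : MeasurePreserving φ ν μ) : MemLpAll (f ∘ φ) ν :=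
  fun p => (hf p).comp_measurePreserving hφ

lemma memLp (hf : MemLpAll f μ) {p : ℝ≥0∞} (hp : p ≠ ∞) : MemLp f p μ := by
  lift p to ℝ≥0 using hp
  exact hf p

end MemLpAll

lemma memLpAll_of_integrable_norm_pow [IsFiniteMeasure μ] (hf : AEStronglyMeasurable f μ)
    (hint : ∀ k : ℕ, Integrable (fun x => ‖f x‖ ^ k) μ) : MemLpAll f μ := by
  intro p
  refine MemLp.mono_exponent (q := ⌈p⌉₊ + 1) ?_ ?_
  · rw [← integrable_norm_rpow_iff hf (by positivity) (by simp)]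
    exact_mod_cast hint (⌈p⌉₊ + 1)
  · exact_mod_cast (Nat.le_ceil p).trans (le_add_of_nonneg_right zero_le_one)

end AllMoments

section RandomMatrices

variable {α : Type*} [MeasurableSpace α] {μ : Measure α}

lemma memLpAll_mul_apply {l m o : Type*} [Fintype m] {A : α → Matrix l m ℝ} {B : α → Matrix m o ℝ}
    (hA : ∀ i j, MemLpAll (fun x => A x i j) μ) (hB : ∀ i j, MemLpAll (fun x => B x i j) μ)
    (i : l) (j : o) : MemLpAll (fun x => (A x * B x) i j) μ := by
  simp only [mul_apply]
  exact MemLpAll.sum _ fun k _ => (hA i k).mul (hB k j)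

variable [IsFiniteMeasure μ] {D n : ℕ}

lemma memLpAll_attnFactor (P Q : Matrix (Fin (D + 1)) (Fin (D + 1)) ℝ)
    {Y : α → Matrix (Fin (D + 1)) (Fin (n + 1)) ℝ} (hY : ∀ i j, MemLpAll (fun x => Y x i j) μ)
    (i j : Fin (D + 1)) : MemLpAll (fun x => attnFactor P Q (Y x) i j) μ := by
  have hPY := memLpAll_mul_apply (fun i j => MemLpAll.const (P i j)) hY
  have hPYY := memLpAll_mul_apply hPY fun i j => hY j i
  have hPYYQ := memLpAll_mul_apply hPYY fun i j => MemLpAll.const (Q i j)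
  simp only [attnFactor, Matrix.add_apply, Matrix.smul_apply, smul_eq_mul]
  exact (MemLpAll.const _).add ((MemLpAll.const _).mul (hPYYQ i j))

lemma memLpAll_TFlinFactor
    (l : List (Matrix (Fin (D + 1)) (Fin (D + 1)) ℝ × Matrix (Fin (D + 1)) (Fin (D + 1)) ℝ))
    {Y : α → Matrix (Fin (D + 1)) (Fin (n + 1)) ℝ} (hY : ∀ i j, MemLpAll (fun x => Y x i j) μ)
    (i j : Fin (D + 1)) : MemLpAll (fun x => TFlinFactor l (Y x) i j) μ := by
  induction l generalizing Y i j with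
  | nil => exact MemLpAll.const _
  | cons pq rest ih =>
    have hS := memLpAll_attnFactor pq.1 pq.2 hY
    exact memLpAll_mul_apply (fun i j => ih (memLpAll_mul_apply hS hY) i j) hS i j

lemma memLpAll_maskedPrompt {w : α → Fin n → Fin D → ℝ} {v : α → Fin n → ℝ}
    (hw : ∀ j i, MemLpAll (fun x => w x j i) μ) (hv : ∀ j, MemLpAll (fun x => v x j) μ)
    (i : Fin (D + 1)) (j : Fin (n + 1)) : MemLpAll (fun x => maskedPrompt (w x) (v x) i j) μ := by
  induction j using Fin.lastCases <;> induction i using Fin.lastCases <;>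
    simp [maskedPrompt, MemLpAll.const, hw, hv]

end RandomMatrices

section Fubini

variable {E W B : Type*} [MeasurableSpace E] [MeasurableSpace W]

lemma iInf_integral_le_integral_prod (μ : Measure E) [SFinite μ] (ν : Measure W)
    [IsProbabilityMeasure ν] {F : E → B → ℝ} (hF : ∀ x β, 0 ≤ F x β) (b : W → B)
    (hint : Integrable (fun p : E × W => F p.1 (b p.2)) (μ.prod ν)) :
    ⨅ β, ∫ x, F x β ∂μ ≤ ∫ p, F p.1 (b p.2) ∂(μ.prod ν) := by
  rw [integral_prod_symm _ hint]
  calc ⨅ β, ∫ x, F x β ∂μ = ∫ _ : W, ⨅ β, ∫ x, F x β ∂μ ∂ν := by simp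
    _ ≤ ∫ w, ∫ x, F x (b w) ∂μ ∂ν :=
      integral_mono (integrable_const _) hint.integral_prod_right fun w =>
        ciInf_le ⟨0, by rintro _ ⟨β, rfl⟩; exact integral_nonneg (hF · β)⟩ (b w)

lemma iInf_integral_le_integral_pi {n : ℕ} (μ : Measure E) [IsProbabilityMeasure μ]
    {F : E → B → ℝ} (hF : ∀ x β, 0 ≤ F x β) (b : (Fin n → E) → B)
    (hint : Integrable (fun u => F (u (Fin.last n)) (b (Fin.init u)))
      (Measure.pi fun _ : Fin (n + 1) => μ)) :
    ⨅ β, ∫ u, F (u (Fin.last n)) β ∂(Measure.pi fun _ : Fin (n + 1) => μ)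
      ≤ ∫ u, F (u (Fin.last n)) (b (Fin.init u)) ∂(Measure.pi fun _ : Fin (n + 1) => μ) := by
  set π := Measure.pi fun _ : Fin (n + 1) => μ
  set e := MeasurableEquiv.piFinSuccAbove (fun _ : Fin (n + 1) => E) (Fin.last n)
  have he : MeasurePreserving e π (μ.prod (Measure.pi fun _ : Fin n => μ)) :=
    measurePreserving_piFinSuccAbove (fun _ => μ) (Fin.last n)
  have he_apply (u : Fin (n + 1) → E) : e u = (u (Fin.last n), Fin.init u) := by
    ext j <;> simp [e, Fin.init]
  have hmarg (β : B) : ∫ u, F (u (Fin.last n)) β ∂π = ∫ x, F x β ∂μ := by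
    have h := he.integral_comp' (fun p => F p.1 β)
    rw [integral_fun_fst (fun x => F x β)] at h
    simpa [he_apply] using h
  have hprod : Integrable (fun p => F p.1 (b p.2)) (μ.prod (Measure.pi fun _ : Fin n => μ)) :=
    (he.integrable_comp_emb e.measurableEmbedding).mp (by simpa [Function.comp_def, he_apply])
  simp_rw [hmarg]
  simpa [he_apply] using (iInf_integral_le_integral_prod μ _ hF b hprod).trans_eq
    (he.integral_comp' (fun p => F p.1 (b p.2))).symm

end Fubini

theorem stmt1_general (D n L : ℕ)
    (μ : Measure (Fin D → ℝ)) [IsProbabilityMeasure μ]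
    (hmom : ∀ k : ℕ, Integrable (fun u => ‖u‖ ^ k) μ)
    (g : (Fin D → ℝ) → ℝ) (hg : Measurable g)
    (C : ℝ) (k : ℕ) (hgrowth : ∀ u, |g u| ≤ C * (1 + ‖u‖) ^ k)
    (wts : Fin L → Matrix (Fin (D + 1)) (Fin (D + 1)) ℝ × Matrix (Fin (D + 1)) (Fin (D + 1)) ℝ) :
    (⨅ β : Fin D → ℝ,
        ∫ u : Fin (n + 1) → Fin D → ℝ,
          ((u (Fin.last n) ⬝ᵥ β) + g (u (Fin.last n))) ^ 2
          ∂(Measure.pi fun _ : Fin (n + 1) => μ))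
      ≤ ∫ u : Fin (n + 1) → Fin D → ℝ,
          (TFlin D n (List.ofFn wts) (promptU D n u fun i => g (u i.castSucc))
              (Fin.last D) (Fin.last n)
            + g (u (Fin.last n))) ^ 2
          ∂(Measure.pi fun _ : Fin (n + 1) => μ) := by
  set π := Measure.pi fun _ : Fin (n + 1) => μ
  have hnorm : MemLpAll (fun x : Fin D → ℝ => ‖x‖) μ :=
    memLpAll_of_integrable_norm_pow continuous_norm.aestronglyMeasurable (by simpa using hmom)
  have hcoord (i : Fin D) : MemLpAll (fun x : Fin D → ℝ => x i) μ :=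
    hnorm.of_abs_le (measurable_pi_apply i).aestronglyMeasurable fun x => norm_le_pi_norm x i
  have hgL : MemLpAll g μ :=
    ((MemLpAll.const C).mul (((MemLpAll.const 1).add hnorm).pow k)).of_abs_le
      hg.aestronglyMeasurable hgrowth
  have hsample {f : (Fin D → ℝ) → ℝ} (hf : MemLpAll f μ) (j : Fin (n + 1)) :
      MemLpAll (fun u => f (u j)) π :=
    hf.comp_measurePreserving (measurePreserving_eval _ j)
  set b : (Fin n → Fin D → ℝ) → Fin D → ℝ :=
    fun w => TFlinCoeff (List.ofFn wts) (maskedPrompt w fun j => g (w j))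
  have hb (i : Fin D) : MemLpAll (fun u => b (Fin.init u) i) π :=
    memLpAll_TFlinFactor _
      (memLpAll_maskedPrompt (fun j i => hsample (hcoord i) _) fun j => hsample hgL _) _ _
  have hpred : MemLpAll (fun u => u (Fin.last n) ⬝ᵥ b (Fin.init u) + g (u (Fin.last n))) π :=
    (MemLpAll.sum _ fun i _ => (hsample (hcoord i) _).mul (hb i)).add (hsample hgL _)
  simp_rw [TFlin_promptU_apply_last]
  exact iInf_integral_le_integral_pi μ (F := fun x β => (x ⬝ᵥ β + g x) ^ 2)
    (fun _ _ => sq_nonneg _) b (hpred.memLp ENNReal.ofNat_ne_top).integrable_sq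

/-- for i.i.d. inputs from an arbitrary distribution with all moments finite
and labels from a fixed target of polynomial growth, no deep linear Transformer beats the
best linear predictor. -/
theorem stmt1 (D n L : ℕ) (hD : 1 ≤ D) (hn : 1 ≤ n) (hL : 1 ≤ L)
    (μ : Measure (Fin D → ℝ)) [IsProbabilityMeasure μ]
    (hmom : ∀ k : ℕ, Integrable (fun u => ‖u‖ ^ k) μ)
    (g : (Fin D → ℝ) → ℝ) (hg : Measurable g)
    (C : ℝ) (k : ℕ) (hgrowth : ∀ u, |g u| ≤ C * (1 + ‖u‖) ^ k)
    (wts : Fin L → Matrix (Fin (D + 1)) (Fin (D + 1)) ℝ × Matrix (Fin (D + 1)) (Fin (D + 1)) ℝ) :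
    (⨅ β : Fin D → ℝ,
        ∫ u : Fin (n + 1) → Fin D → ℝ,
          ((u (Fin.last n) ⬝ᵥ β) + g (u (Fin.last n))) ^ 2
          ∂(Measure.pi fun _ : Fin (n + 1) => μ))
      ≤ ∫ u : Fin (n + 1) → Fin D → ℝ,
          (TFlin D n (List.ofFn wts) (promptU D n u fun i => g (u i.castSucc))
              (Fin.last D) (Fin.last n)
            + g (u (Fin.last n))) ^ 2
          ∂(Measure.pi fun _ : Fin (n + 1) => μ) :=
  stmt1_general D n L μ hmom g hg C k hgrowth wts
end
end

section
/- Fix D, n, L ≥ 1 and weights (P^(ℓ), Q^(ℓ))_{ℓ=1}^L of an L-layer linear Transformer. Then there exist functions A : (ℝ^D)^n × ℝ^n → ℝ^{D×D}, b : (ℝ^D)^n × ℝ^n → ℝ^D, U' : (ℝ^D)^n × ℝ^n → ℝ^{D×n}, and V' : (ℝ^D)^n × ℝ^n → ℝ^{1×n} such that for all u_1, …, u_{n+1} ∈ ℝ^D and v_1, …, v_n ∈ ℝ, the output ζ^(L) of the linear Transformer applied to the prompt ζ (with i-th column (u_i, v_i) for i ≤ n and last column (u_{n+1}, 0)) has the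 block form ζ^(L) = [[U'(u_{1:n}, v_{1:n}), A(u_{1:n}, v_{1:n})·u_{n+1}], [V'(u_{1:n}, v_{1:n}), ⟨b(u_{1:n}, v_{1:n}), u_{n+1}⟩]]; in particular the first n columns of ζ^(L) do not depend on u_{n+1}, the query input column is a linear function of u_{n+1}, and the prediction entry is a linear functional of u_{n+1} with coefficients depending only on the first n examples. -/
open MeasureTheory ProbabilityTheory Matrix

noncomputable section

namespace Stmt2Aux

variable {D n : ℕ}

/-- Block matrix whose first `n` columns are `W` and last column is `c`. -/
def blk (D n : ℕ) (W : Matrix (Fin (D + 1)) (Fin n) ℝ) (c : Fin (D + 1) → ℝ) :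
    Matrix (Fin (D + 1)) (Fin (n + 1)) ℝ :=
  Matrix.of fun i j => if hj : (j : ℕ) < n then W i ⟨j, hj⟩ else c i

lemma blk_cast (W : Matrix (Fin (D+1)) (Fin n) ℝ) (c) (i) (t : Fin n) :
    blk D n W c i t.castSucc = W i t := by
  simp [blk]

lemma blk_last (W : Matrix (Fin (D+1)) (Fin n) ℝ) (c) (i) :
    blk D n W c i (Fin.last n) = c i := by
  simp [blk]

lemma blk_mul_mask (W : Matrix (Fin (D+1)) (Fin n) ℝ) (c) :
    blk D n W c * attnMask n = blk D n W 0 := by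
  ext i j
  rw [attnMask, Matrix.mul_diagonal]
  by_cases hj : (j : ℕ) < n
  · have hne : j ≠ Fin.last n := by
      intro h; rw [h] at hj; simp [Fin.last] at hj
    simp [blk, hj, hne]
  · have hjl : j = Fin.last n := by
      have := j.isLt
      exact Fin.ext (by simp [Fin.last]; omega)
    simp [blk, hj, hjl]

lemma blk_mul_blkT (W : Matrix (Fin (D+1)) (Fin n) ℝ) (c) :
    blk D n W 0 * (blk D n W c)ᵀ = W * Wᵀ := by
  ext i j
  simp [Matrix.mul_apply, Fin.sum_univ_castSucc, blk_cast, blk_last]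

lemma mul_blk (S : Matrix (Fin (D+1)) (Fin (D+1)) ℝ) (W : Matrix (Fin (D+1)) (Fin n) ℝ) (c) :
    S * blk D n W c = blk D n (S * W) (S *ᵥ c) := by
  ext i j
  by_cases hj : (j:ℕ) < n <;>
    simp [blk, Matrix.mul_apply, Matrix.mulVec, dotProduct, hj]

lemma blk_add (W W₂ : Matrix (Fin (D+1)) (Fin n) ℝ) (c c₂) :
    blk D n W c + blk D n W₂ c₂ = blk D n (W + W₂) (c + c₂) := by
  ext i j; by_cases hj : (j:ℕ) < n <;> simp [blk, hj]

lemma blk_smul (r : ℝ) (W : Matrix (Fin (D+1)) (Fin n) ℝ) (c) :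
    r • blk D n W c = blk D n (r • W) (r • c) := by
  ext i j; by_cases hj : (j:ℕ) < n <;> simp [blk, hj]

/-- One attention layer preserves the block structure. -/
lemma attn_blk (P Q : Matrix (Fin (D+1)) (Fin (D+1)) ℝ) (W : Matrix (Fin (D+1)) (Fin n) ℝ) (c) :
    attn D n P Q (blk D n W c) =
      blk D n (W + (n:ℝ)⁻¹ • (P * (W * Wᵀ) * Q * W))
              (c + (n:ℝ)⁻¹ • ((P * (W * Wᵀ) * Q) *ᵥ c)) := by
  have h1 : P * blk D n W c * attnMask n * ((blk D n W c)ᵀ * Q * blk D n W c)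
      = (P * (W * Wᵀ) * Q) * blk D n W c := by
    rw [Matrix.mul_assoc P, blk_mul_mask]
    calc P * blk D n W 0 * ((blk D n W c)ᵀ * Q * blk D n W c)
        = P * (blk D n W 0 * (blk D n W c)ᵀ) * Q * blk D n W c := by
          simp only [Matrix.mul_assoc]
      _ = _ := by rw [blk_mul_blkT]
  simp only [attn]
  rw [h1, mul_blk, blk_smul, blk_add]

/-- A deep linear Transformer preserves the block structure. -/
lemma key (D n : ℕ)
    (wts : List (Matrix (Fin (D+1)) (Fin (D+1)) ℝ × Matrix (Fin (D+1)) (Fin (D+1)) ℝ)) :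
    ∃ f : Matrix (Fin (D+1)) (Fin n) ℝ × Matrix (Fin (D+1)) (Fin D) ℝ →
          Matrix (Fin (D+1)) (Fin n) ℝ × Matrix (Fin (D+1)) (Fin D) ℝ,
      ∀ (W : Matrix (Fin (D+1)) (Fin n) ℝ) (Mm : Matrix (Fin (D+1)) (Fin D) ℝ) (x : Fin D → ℝ),
        TFlin D n wts (blk D n W (Mm *ᵥ x)) = blk D n (f (W, Mm)).1 ((f (W, Mm)).2 *ᵥ x) := by
  induction wts with
  | nil => exact ⟨id, fun W Mm x => rfl⟩
  | cons pq rest ih =>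
    obtain ⟨f, hf⟩ := ih
    refine ⟨fun p => f (p.1 + (n:ℝ)⁻¹ • (pq.1 * (p.1 * p.1ᵀ) * pq.2 * p.1),
                        p.2 + (n:ℝ)⁻¹ • (pq.1 * (p.1 * p.1ᵀ) * pq.2 * p.2)), ?_⟩
    intro W Mm x
    have h0 : TFlin D n (pq :: rest) (blk D n W (Mm *ᵥ x))
        = TFlin D n rest (attn D n pq.1 pq.2 (blk D n W (Mm *ᵥ x))) := rfl
    rw [h0, attn_blk]
    have hc : (Mm *ᵥ x) + (n:ℝ)⁻¹ • ((pq.1 * (W * Wᵀ) * pq.2) *ᵥ (Mm *ᵥ x))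
        = (Mm + (n:ℝ)⁻¹ • (pq.1 * (W * Wᵀ) * pq.2 * Mm)) *ᵥ x := by
      simp [Matrix.add_mulVec, Matrix.smul_mulVec, Matrix.mulVec_mulVec]
    rw [hc]
    exact hf _ _ x

def W0 (D n : ℕ) (u : Fin n → Fin D → ℝ) (v : Fin n → ℝ) : Matrix (Fin (D+1)) (Fin n) ℝ :=
  Matrix.of fun i t => if hi : (i:ℕ) < D then u t ⟨i, hi⟩ else v t

def E0 (D : ℕ) : Matrix (Fin (D+1)) (Fin D) ℝ :=
  Matrix.of fun i d => if hi : (i:ℕ) < D then (if d = ⟨i, hi⟩ then 1 else 0) else 0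

lemma E0_mulVec (x : Fin D → ℝ) (i : Fin (D+1)) :
    (E0 D *ᵥ x) i = if hi : (i:ℕ) < D then x ⟨i, hi⟩ else 0 := by
  by_cases hi : (i:ℕ) < D <;>
    simp [E0, Matrix.mulVec, dotProduct, hi, ite_mul, Finset.sum_ite_eq]

lemma prompt_eq (u : Fin (n+1) → Fin D → ℝ) (v : Fin n → ℝ) :
    promptU D n u v = blk D n (W0 D n (fun t => u t.castSucc) v) (E0 D *ᵥ u (Fin.last n)) := by
  ext i j
  by_cases hj : (j:ℕ) < n
  · have hje : (⟨(j:ℕ), hj⟩ : Fin n).castSucc = j := Fin.ext rfl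
    by_cases hi : (i:ℕ) < D <;> simp [promptU, blk, W0, hi, hj, hje]
  · have hjl : j = Fin.last n := by
      have := j.isLt
      exact Fin.ext (by simp [Fin.last]; omega)
    by_cases hi : (i:ℕ) < D <;>
      simp [promptU, blk, hi, hj, hjl, E0_mulVec]

end Stmt2Aux

/-- the output of a deep linear Transformer has a block structure: the first
`n` columns do not depend on the query input `u_{n+1}`, the query input column is a linear
function of `u_{n+1}`, and the prediction entry is a linear functional of `u_{n+1}`,
with coefficients depending only on the first `n` examples. -/
theorem stmt2 (D n L : ℕ) (hD : 1 ≤ D) (hn : 1 ≤ n) (hL : 1 ≤ L)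
    (wts : Fin L → Matrix (Fin (D + 1)) (Fin (D + 1)) ℝ × Matrix (Fin (D + 1)) (Fin (D + 1)) ℝ) :
    ∃ (A : (Fin n → Fin D → ℝ) → (Fin n → ℝ) → Matrix (Fin D) (Fin D) ℝ)
      (b : (Fin n → Fin D → ℝ) → (Fin n → ℝ) → (Fin D → ℝ))
      (U' : (Fin n → Fin D → ℝ) → (Fin n → ℝ) → Matrix (Fin D) (Fin n) ℝ)
      (V' : (Fin n → Fin D → ℝ) → (Fin n → ℝ) → (Fin n → ℝ)),
      ∀ (u : Fin (n + 1) → Fin D → ℝ) (v : Fin n → ℝ),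
        TFlin D n (List.ofFn wts) (promptU D n u v) =
          Matrix.of fun (i : Fin (D + 1)) (j : Fin (n + 1)) =>
            if hj : (j : ℕ) < n then
              (if hi : (i : ℕ) < D then
                U' (fun t => u t.castSucc) v ⟨(i : ℕ), hi⟩ ⟨(j : ℕ), hj⟩
               else V' (fun t => u t.castSucc) v ⟨(j : ℕ), hj⟩)
            else
              (if hi : (i : ℕ) < D then
                (A (fun t => u t.castSucc) v).mulVec (u (Fin.last n)) ⟨(i : ℕ), hi⟩
               else b (fun t => u t.castSucc) v ⬝ᵥ u (Fin.last n)) := by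
  obtain ⟨f, hf⟩ := Stmt2Aux.key D n (List.ofFn wts)
  refine ⟨fun w v p q => (f (Stmt2Aux.W0 D n w v, Stmt2Aux.E0 D)).2 p.castSucc q,
          fun w v q => (f (Stmt2Aux.W0 D n w v, Stmt2Aux.E0 D)).2 (Fin.last D) q,
          fun w v p q => (f (Stmt2Aux.W0 D n w v, Stmt2Aux.E0 D)).1 p.castSucc q,
          fun w v q => (f (Stmt2Aux.W0 D n w v, Stmt2Aux.E0 D)).1 (Fin.last D) q, ?_⟩
  intro u v
  rw [Stmt2Aux.prompt_eq, hf]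
  ext i j
  simp only [Stmt2Aux.blk, Matrix.of_apply]
  set F := f (Stmt2Aux.W0 D n (fun t => u t.castSucc) v, Stmt2Aux.E0 D) with hF
  by_cases hj : (j:ℕ) < n
  · rw [dif_pos hj, dif_pos hj]
    by_cases hi : (i:ℕ) < D
    · rw [dif_pos hi]
      have : (⟨(i:ℕ), hi⟩ : Fin D).castSucc = i := Fin.ext rfl
      rw [this]
    · rw [dif_neg hi]
      have hil : i = Fin.last D := by
        have := i.isLt
        exact Fin.ext (by simp [Fin.last]; omega)
      rw [hil]
  · rw [dif_neg hj, dif_neg hj]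
    by_cases hi : (i:ℕ) < D
    · rw [dif_pos hi]
      have hc : (⟨(i:ℕ), hi⟩ : Fin D).castSucc = i := Fin.ext rfl
      simp [Matrix.mulVec, dotProduct, hc]
    · rw [dif_neg hi]
      have hil : i = Fin.last D := by
        have := i.isLt
        exact Fin.ext (by simp [Fin.last]; omega)
      simp [Matrix.mulVec, dotProduct, hil]
end
end

section
/- Let D, n ≥ 1, U ∈ ℝ^{D×n}, V ∈ ℝ^{1×n}, u_q ∈ ℝ^D, Γ ∈ ℝ^{D×D}, and let Z = [[U, u_q], [V, 0]] ∈ ℝ^{(D+1)×(n+1)}. Then the LSA layer with weights P = [[0_{D×D}, 0], [0, 1]] and Q = [[Γ, 0], [0, 0]] satisfies attn(Z) = [[U, u_q], [V + (1/n)·V·Uᵀ·Γ·U, (1/n)·V·Uᵀ·Γ·u_q]]. In particular, the prediction entry equals (1/n)·Σ_{i=1}^n v_i·⟨u_i, Γ·u_q⟩, where u_i and v_i denote the columns of U and V. -/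
open MeasureTheory ProbabilityTheory Matrix

noncomputable section

/-- The sparse value matrix `P = [[0,0],[0,1]]`. -/
def Psparse (D : ℕ) : Matrix (Fin (D + 1)) (Fin (D + 1)) ℝ :=
  Matrix.of fun i j => if (i : ℕ) = D ∧ (j : ℕ) = D then 1 else 0

/-- `diag(Γ, 0)`: places `Γ` in the top-left `D × D` block. -/
def diagEmbed (D : ℕ) (Γ : Matrix (Fin D) (Fin D) ℝ) : Matrix (Fin (D + 1)) (Fin (D + 1)) ℝ :=
  Matrix.of fun i j =>
    if hi : (i : ℕ) < D then
      (if hj : (j : ℕ) < D then Γ ⟨(i : ℕ), hi⟩ ⟨(j : ℕ), hj⟩ else 0)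
    else 0

/-- The prompt `Z = [[U, u_q], [V, 0]]`. -/
def promptUVq (D n : ℕ) (U : Matrix (Fin D) (Fin n) ℝ) (V : Fin n → ℝ) (uq : Fin D → ℝ) :
    Matrix (Fin (D + 1)) (Fin (n + 1)) ℝ :=
  Matrix.of fun i j =>
    if hi : (i : ℕ) < D then
      (if hj : (j : ℕ) < n then U ⟨(i : ℕ), hi⟩ ⟨(j : ℕ), hj⟩ else uq ⟨(i : ℕ), hi⟩)
    else (if hj : (j : ℕ) < n then V ⟨(j : ℕ), hj⟩ else 0)

lemma PZ_entry (D n : ℕ) (A : Matrix (Fin (D+1)) (Fin (n+1)) ℝ) (i : Fin (D+1)) (b : Fin (n+1)) :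
    (Psparse D * A) i b = if (i:ℕ) = D then A (Fin.last D) b else 0 := by
  rw [Matrix.mul_apply]
  by_cases hi : (i:ℕ) = D
  · simp only [Psparse, Matrix.of_apply, hi, true_and, if_pos]
    rw [Finset.sum_eq_single (Fin.last D)]
    · simp
    · intro k _ hk
      rw [if_neg, zero_mul]
      intro h; exact hk (Fin.ext (by simp [h]))
    · simp
  · simp [Psparse, hi]

lemma castSucc_lt (D : ℕ) (r : Fin D) : ((Fin.castSucc r : Fin (D+1)) : ℕ) < D := r.isLt

lemma triple_entry (D n : ℕ) (U : Matrix (Fin D) (Fin n) ℝ) (V : Fin n → ℝ) (uq : Fin D → ℝ)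
    (Γ : Matrix (Fin D) (Fin D) ℝ) (b j : Fin (n+1)) :
    ((promptUVq D n U V uq)ᵀ * diagEmbed D Γ * promptUVq D n U V uq) b j
      = (fun r => promptUVq D n U V uq r.castSucc b) ⬝ᵥ
          Γ.mulVec (fun s => promptUVq D n U V uq s.castSucc j) := by
  set Z := promptUVq D n U V uq with hZ
  rw [Matrix.mul_apply]
  have hQlast : ∀ s, diagEmbed D Γ (Fin.last D) s = 0 := by
    intro s; simp [diagEmbed]
  have hQ : ∀ (r s : Fin D), diagEmbed D Γ r.castSucc s.castSucc = Γ r s := by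
    intro r s
    simp only [diagEmbed, Matrix.of_apply, Fin.coe_castSucc, r.isLt, s.isLt, dif_pos]
  rw [Fin.sum_univ_castSucc]
  have hlast : ((Z)ᵀ * diagEmbed D Γ) b (Fin.last D) * Z (Fin.last D) j
      = 0 * Z (Fin.last D) j := by
    congr 1
    rw [Matrix.mul_apply]
    apply Finset.sum_eq_zero
    intro r _
    have : diagEmbed D Γ r (Fin.last D) = 0 := by
      simp [diagEmbed]
    simp [this]
  rw [hlast, zero_mul, add_zero]
  simp only [dotProduct, Matrix.mulVec, dotProduct]
  have hAB : ∀ s : Fin D, ((Z)ᵀ * diagEmbed D Γ) b s.castSucc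
      = ∑ r : Fin D, Z r.castSucc b * Γ r s := by
    intro s
    rw [Matrix.mul_apply, Fin.sum_univ_castSucc, hQlast, mul_zero, add_zero]
    exact Finset.sum_congr rfl fun r _ => by rw [Matrix.transpose_apply, hQ]
  simp_rw [hAB, Finset.sum_mul, Finset.mul_sum]
  rw [Finset.sum_comm]
  exact Finset.sum_congr rfl fun r _ => Finset.sum_congr rfl fun s _ => by ring


/-- explicit formula for one LSA layer with the sparse weights
`P = [[0,0],[0,1]]`, `Q = [[Γ,0],[0,0]]`:
`attn(Z) = [[U, u_q], [V + (1/n) V Uᵀ Γ U, (1/n) V Uᵀ Γ u_q]]`, i.e. the prediction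
entry is `(1/n) Σ_i v_i ⟨u_i, Γ u_q⟩`. -/
theorem stmt4 (D n : ℕ) (hD : 1 ≤ D) (hn : 1 ≤ n)
    (U : Matrix (Fin D) (Fin n) ℝ) (V : Fin n → ℝ) (uq : Fin D → ℝ)
    (Γ : Matrix (Fin D) (Fin D) ℝ) :
    attn D n (Psparse D) (diagEmbed D Γ) (promptUVq D n U V uq) =
      Matrix.of fun (i : Fin (D + 1)) (j : Fin (n + 1)) =>
        if hi : (i : ℕ) < D then promptUVq D n U V uq i j
        else if hj : (j : ℕ) < n then
          V ⟨(j : ℕ), hj⟩ +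
            (n : ℝ)⁻¹ * ∑ m : Fin n,
              V m * ((fun r => U r m) ⬝ᵥ Γ.mulVec fun r => U r ⟨(j : ℕ), hj⟩)
        else (n : ℝ)⁻¹ * ∑ m : Fin n, V m * ((fun r => U r m) ⬝ᵥ Γ.mulVec uq) := by
  ext i j
  simp only [attn, Matrix.add_apply, Matrix.smul_apply, smul_eq_mul, Matrix.of_apply]
  set Z := promptUVq D n U V uq with hZ
  have key : (Psparse D * Z * attnMask n * ((Z)ᵀ * diagEmbed D Γ * Z)) i j
      = if (i:ℕ) = D then
          ∑ m : Fin n, V m * ((fun r => U r m) ⬝ᵥ Γ.mulVec (fun s => Z s.castSucc j))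
        else 0 := by
    rw [Matrix.mul_apply]
    by_cases hi : (i:ℕ) = D
    · rw [if_pos hi, Fin.sum_univ_castSucc]
      have h1 : (Psparse D * Z * attnMask n) i (Fin.last n) = 0 := by
        rw [attnMask, Matrix.mul_diagonal, if_pos rfl, mul_zero]
      rw [h1, zero_mul, add_zero]
      apply Finset.sum_congr rfl
      intro m _
      have hne : (Fin.castSucc m : Fin (n+1)) ≠ Fin.last n := by
        intro h
        have := m.isLt
        simp [Fin.ext_iff] at h
        omega
      rw [attnMask, Matrix.mul_diagonal, if_neg hne, mul_one, PZ_entry, if_pos hi,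
        triple_entry]
      have hv : Z (Fin.last D) (Fin.castSucc m) = V m := by
        simp [hZ, promptUVq, m.isLt]
      have hu : (fun r : Fin D => Z r.castSucc (Fin.castSucc m)) = fun r => U r m := by
        funext r; simp [hZ, promptUVq, r.isLt, m.isLt]
      rw [hv, hu]
    · rw [if_neg hi]
      apply Finset.sum_eq_zero
      intro b _
      rw [attnMask, Matrix.mul_diagonal, PZ_entry, if_neg hi, zero_mul, zero_mul]
  rw [key]
  by_cases hi : (i:ℕ) < D
  · have hne : ¬(i:ℕ) = D := by omega
    rw [dif_pos hi, if_neg hne, mul_zero, add_zero]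
  · have hieq : (i:ℕ) = D := by have := i.isLt; omega
    rw [dif_neg hi, if_pos hieq]
    by_cases hj : (j:ℕ) < n
    · have hw : (fun s : Fin D => Z s.castSucc j) = fun s => U s ⟨(j:ℕ), hj⟩ := by
        funext s; simp [hZ, promptUVq, s.isLt, hj]
      have hz : Z i j = V ⟨(j:ℕ), hj⟩ := by
        simp [hZ, promptUVq, hi, hj]
      rw [dif_pos hj, hw, hz]
    · have hw : (fun s : Fin D => Z s.castSucc j) = uq := by
        funext s; simp [hZ, promptUVq, s.isLt, hj]
      have hz : Z i j = 0 := by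
        simp [hZ, promptUVq, hi, hj]
      rw [dif_neg hj, hw, hz, zero_add]
end
end

section
/- Let d ≥ 1 and d̄ = (d+2)(d+1)/2. There exist matrices W₀, W₁ ∈ ℝ^{d̄×d̄} such that for every x ∈ ℝ^d, the vector z = (1, x, 0_{d̄−d−1}) ∈ ℝ^{d̄} satisfies z + (W₀·z) ⊙ (W₁·z) = x̄(x), where ⊙ denotes the entrywise product; that is, one application of a bilinear feed-forward layer to the prompt column maps the embedded input to the full vector of (centered) quadratic features. -/
open Matrix

noncomputable section

/-- Position of the pair `(i,j)`, `0 ≤ i ≤ j ≤ d`, in the lexicographic enumeration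
`(0,0), (0,1), …, (0,d), (1,1), …, (1,d), (2,2), …, (d,d)`. -/
def pairEnc (d i j : ℕ) : ℕ :=
  i * (d + 1) - i * (i - 1) / 2 + (j - i)

/-- Value of the quadratic feature indexed by the pair `(i,j)`, `0 ≤ i ≤ j ≤ d`:
`1` for `(0,0)`, `x[j]` for `(0,j)`, `x[i]² - 1` for `(i,i)`, and `x[i]·x[j]` for `i < j`. -/
def qval (d : ℕ) (x : Fin d → ℝ) (i j : Fin (d + 1)) : ℝ :=
  if h0 : (i : ℕ) = 0 then
    (if hj : (j : ℕ) = 0 then 1 else x ⟨(j : ℕ) - 1, by have := j.isLt; omega⟩)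
  else if hij : (i : ℕ) = (j : ℕ) then
    (x ⟨(i : ℕ) - 1, by have := i.isLt; omega⟩) ^ 2 - 1
  else
    x ⟨(i : ℕ) - 1, by have := i.isLt; omega⟩ *
      x ⟨(j : ℕ) - 1, by have := i.isLt; have := j.isLt; omega⟩

/-- The quadratic feature map `x̄ : ℝ^d → ℝ^{d̄}`, `d̄ = (d+2)(d+1)/2`, listing
`1, x[1], …, x[d], x[1]²-1, x[1]x[2], …, x[1]x[d], x[2]²-1, …, x[d]²-1`. -/
def qfeat (d : ℕ) (x : Fin d → ℝ) (k : Fin ((d + 2) * (d + 1) / 2)) : ℝ :=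
  ∑ p : Fin (d + 1) × Fin (d + 1),
    if p.1 ≤ p.2 ∧ pairEnc d p.1 p.2 = (k : ℕ) then qval d x p.1 p.2 else 0

/-- The embedded input column `z = (1, x, 0)` in `ℝ^D`. -/
def embedIn (d D : ℕ) (x : Fin d → ℝ) (k : Fin D) : ℝ :=
  if h0 : (k : ℕ) = 0 then 1
  else if h1 : (k : ℕ) ≤ d then x ⟨(k : ℕ) - 1, by omega⟩
  else 0

/-! ### Auxiliary material -/

/-- Partial sums `T(i) = ∑_{t<i} (d+1-t)` of the row lengths of the triangular enumeration. -/
def Tsum (d i : ℕ) : ℕ := ∑ t ∈ Finset.range i, (d + 1 - t)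

lemma even_mul_pred (n : ℕ) : 2 * (n * (n - 1) / 2) = n * (n - 1) := by
  apply Nat.two_mul_div_two_of_even
  rcases Nat.even_or_odd n with h | h
  · exact h.mul_right _
  · exact ((Nat.Odd.sub_odd h odd_one)).mul_left _

lemma pairEnc_T (d : ℕ) : ∀ i, i ≤ d + 1 → i * (d + 1) - i * (i - 1) / 2 = Tsum d i := by
  intro i
  induction i with
  | zero => simp [Tsum]
  | succ n ih =>
    intro h
    rw [Tsum, Finset.sum_range_succ, ← Tsum, ← ih (by omega)]
    have ha := even_mul_pred n
    have hb := even_mul_pred (n + 1)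
    have h1 : (n + 1) * (d + 1) = n * (d + 1) + (d + 1) := by ring
    have h2 : (n + 1) * ((n + 1) - 1) = n * (n - 1) + 2 * n := by
      cases n with
      | zero => simp
      | succ m => simp [Nat.succ_sub_one]; ring
    have h3 : n * (n - 1) ≤ n * (d + 1) := Nat.mul_le_mul_left n (by omega)
    omega

lemma Tsum_mono (d : ℕ) {a b : ℕ} (h : a ≤ b) : Tsum d a ≤ Tsum d b :=
  Finset.sum_le_sum_of_subset (Finset.range_subset_range.2 h)

lemma Tsum_succ (d i : ℕ) : Tsum d (i + 1) = Tsum d i + (d + 1 - i) :=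
  Finset.sum_range_succ _ _

lemma pairEnc_eq (d i j : ℕ) (h : i ≤ d + 1) : pairEnc d i j = Tsum d i + (j - i) := by
  rw [pairEnc, pairEnc_T d i h]

lemma pairEnc_zero (d j : ℕ) : pairEnc d 0 j = j := by simp [pairEnc]

lemma pairEnc_inj {d i j i' j' : ℕ} (hij : i ≤ j) (hj : j ≤ d)
    (hij' : i' ≤ j') (hj' : j' ≤ d)
    (h : pairEnc d i j = pairEnc d i' j') : i = i' ∧ j = j' := by
  rw [pairEnc_eq d i j (by omega), pairEnc_eq d i' j' (by omega)] at h
  have key : ∀ a b a' b' : ℕ, a ≤ b → b ≤ d → a' ≤ b' → b' ≤ d →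
      a < a' → Tsum d a + (b - a) < Tsum d a' + (b' - a') := by
    intro a b a' b' h1 h2 h3 h4 h5
    have : Tsum d a + (b - a) < Tsum d (a + 1) := by
      rw [Tsum_succ]; omega
    have h6 : Tsum d (a + 1) ≤ Tsum d a' := Tsum_mono d h5
    omega
  rcases lt_trichotomy i i' with hlt | heq | hgt
  · exact absurd h (Nat.ne_of_lt (key i j i' j' hij hj hij' hj' hlt))
  · subst heq; omega
  · exact absurd h.symm (Nat.ne_of_lt (key i' j' i j hij' hj' hij hj hgt))

lemma pairEnc_gt {d i j : ℕ} (hi : 1 ≤ i) (hij : i ≤ j) (hj : j ≤ d) :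
    d < pairEnc d i j := by
  rw [pairEnc_eq d i j (by omega)]
  have h1 : Tsum d 1 ≤ Tsum d i := Tsum_mono d hi
  have : Tsum d 1 = d + 1 := by simp [Tsum]
  omega

lemma Dge (d : ℕ) : d + 1 ≤ (d + 2) * (d + 1) / 2 := by
  rw [Nat.le_div_iff_mul_le (by norm_num)]
  nlinarith

/-- Row of `W₀` corresponding to the pair `(i,j)`. -/
def rowA (d D : ℕ) (i j : Fin (d + 1)) (c : Fin D) : ℝ :=
  (if (i : ℕ) ≠ 0 ∧ (c : ℕ) = (i : ℕ) then 1 else 0) +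
  (if (i : ℕ) ≠ 0 ∧ i = j ∧ (c : ℕ) = 0 then -1 else 0)

/-- Row of `W₁` corresponding to the pair `(i,j)`. -/
def rowB (d D : ℕ) (i j : Fin (d + 1)) (c : Fin D) : ℝ :=
  (if (i : ℕ) ≠ 0 ∧ (c : ℕ) = (j : ℕ) then 1 else 0) +
  (if (i : ℕ) ≠ 0 ∧ i = j ∧ (c : ℕ) = 0 then 1 else 0)

lemma sum_if_coe {D : ℕ} (m : ℕ) (hm : m < D) (f : Fin D → ℝ) :
    ∑ c : Fin D, (if (c : ℕ) = m then f c else 0) = f ⟨m, hm⟩ := by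
  have h : ∀ c : Fin D, ((c : ℕ) = m) ↔ (c = ⟨m, hm⟩) := fun c => by
    rw [Fin.ext_iff]
  simp_rw [h]
  simp

lemma rowA_zero (d D : ℕ) (i j : Fin (d + 1)) (c : Fin D) (h0 : (i : ℕ) = 0) :
    rowA d D i j c = 0 := by simp [rowA, h0]

lemma rowB_zero (d D : ℕ) (i j : Fin (d + 1)) (c : Fin D) (h0 : (i : ℕ) = 0) :
    rowB d D i j c = 0 := by simp [rowB, h0]

lemma dotA (d : ℕ) (x : Fin d → ℝ) (i j : Fin (d + 1)) (h0 : (i : ℕ) ≠ 0) :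
    ∑ c : Fin ((d + 2) * (d + 1) / 2),
        rowA d ((d + 2) * (d + 1) / 2) i j c * embedIn d ((d + 2) * (d + 1) / 2) x c
      = x ⟨(i : ℕ) - 1, by have := i.isLt; omega⟩ - (if i = j then 1 else 0) := by
  have hiD : (i : ℕ) < (d + 2) * (d + 1) / 2 := lt_of_lt_of_le i.isLt (Dge d)
  have h0D : 0 < (d + 2) * (d + 1) / 2 := by omega
  have hsplit : ∀ c : Fin ((d + 2) * (d + 1) / 2),
      rowA d ((d + 2) * (d + 1) / 2) i j c * embedIn d ((d + 2) * (d + 1) / 2) x c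
        = (if (c : ℕ) = (i : ℕ) then embedIn d ((d + 2) * (d + 1) / 2) x c else 0)
          + (if i = j then
              (if (c : ℕ) = 0 then -(embedIn d ((d + 2) * (d + 1) / 2) x c) else 0) else 0) := by
    intro c
    by_cases hc : (c : ℕ) = (i : ℕ)
    · have hz : ¬ (c : ℕ) = 0 := by omega
      simp [rowA, h0, hc, hz]
    · by_cases hz : (c : ℕ) = 0
      · by_cases he : i = j
        · have hj0' : ¬ (j : ℕ) = 0 := by rw [← he]; exact h0
          simp [rowA, h0, hc, hz, he, hj0', Ne.symm hj0']
        · simp [rowA, h0, hc, hz, he]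
      · simp [rowA, hc, hz]
  rw [Finset.sum_congr rfl (fun c _ => hsplit c), Finset.sum_add_distrib]
  rw [sum_if_coe (i : ℕ) hiD]
  have hzi : embedIn d ((d + 2) * (d + 1) / 2) x ⟨(i : ℕ), hiD⟩
      = x ⟨(i : ℕ) - 1, by have := i.isLt; omega⟩ := by
    have hle : (i : ℕ) ≤ d := by have := i.isLt; omega
    simp [embedIn, h0, hle]
  rw [hzi]
  by_cases he : i = j
  · simp only [if_pos he]
    rw [sum_if_coe 0 h0D]
    simp [embedIn]
    ring
  · simp [he]

lemma dotB (d : ℕ) (x : Fin d → ℝ) (i j : Fin (d + 1)) (h0 : (i : ℕ) ≠ 0)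
    (hj0 : (j : ℕ) ≠ 0) :
    ∑ c : Fin ((d + 2) * (d + 1) / 2),
        rowB d ((d + 2) * (d + 1) / 2) i j c * embedIn d ((d + 2) * (d + 1) / 2) x c
      = x ⟨(j : ℕ) - 1, by have := j.isLt; omega⟩ + (if i = j then 1 else 0) := by
  have hjD : (j : ℕ) < (d + 2) * (d + 1) / 2 := lt_of_lt_of_le j.isLt (Dge d)
  have h0D : 0 < (d + 2) * (d + 1) / 2 := by omega
  have hsplit : ∀ c : Fin ((d + 2) * (d + 1) / 2),
      rowB d ((d + 2) * (d + 1) / 2) i j c * embedIn d ((d + 2) * (d + 1) / 2) x c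
        = (if (c : ℕ) = (j : ℕ) then embedIn d ((d + 2) * (d + 1) / 2) x c else 0)
          + (if i = j then
              (if (c : ℕ) = 0 then embedIn d ((d + 2) * (d + 1) / 2) x c else 0) else 0) := by
    intro c
    by_cases hc : (c : ℕ) = (j : ℕ)
    · have hz : ¬ (c : ℕ) = 0 := by omega
      simp [rowB, h0, hc, hz, hj0]
    · by_cases hz : (c : ℕ) = 0
      · by_cases he : i = j
        · simp [rowB, h0, hc, hz, he, hj0, Ne.symm hj0]
        · simp [rowB, h0, hc, hz, he]
      · simp [rowB, hc, hz]
  rw [Finset.sum_congr rfl (fun c _ => hsplit c), Finset.sum_add_distrib]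
  rw [sum_if_coe (j : ℕ) hjD]
  have hzj : embedIn d ((d + 2) * (d + 1) / 2) x ⟨(j : ℕ), hjD⟩
      = x ⟨(j : ℕ) - 1, by have := j.isLt; omega⟩ := by
    have hle : (j : ℕ) ≤ d := by have := j.isLt; omega
    simp [embedIn, hj0, hle]
  rw [hzj]
  by_cases he : i = j
  · simp only [if_pos he]
    rw [sum_if_coe 0 h0D]
    simp [embedIn]
  · simp [he]

/-- there are bilinear feed-forward weights `W₀, W₁` mapping the embedded
input `z = (1, x, 0)` to the full vector of (centered) quadratic features:
`z + (W₀z) ⊙ (W₁z) = x̄(x)` for all `x`. -/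
theorem stmt7 (d : ℕ) (hd : 1 ≤ d) :
    ∃ W0 W1 : Matrix (Fin ((d + 2) * (d + 1) / 2)) (Fin ((d + 2) * (d + 1) / 2)) ℝ,
      ∀ x : Fin d → ℝ,
        (fun k => embedIn d ((d + 2) * (d + 1) / 2) x k
            + W0.mulVec (embedIn d ((d + 2) * (d + 1) / 2) x) k
              * W1.mulVec (embedIn d ((d + 2) * (d + 1) / 2) x) k)
          = qfeat d x := by
  classical
  set rowA' := rowA d ((d + 2) * (d + 1) / 2) with hrA
  set rowB' := rowB d ((d + 2) * (d + 1) / 2) with hrB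
  refine ⟨(fun k c => ∑ p : Fin (d + 1) × Fin (d + 1),
      if p.1 ≤ p.2 ∧ pairEnc d p.1 p.2 = (k : ℕ)
        then rowA' p.1 p.2 c else 0),
    (fun k c => ∑ p : Fin (d + 1) × Fin (d + 1),
      if p.1 ≤ p.2 ∧ pairEnc d p.1 p.2 = (k : ℕ)
        then rowB' p.1 p.2 c else 0), ?_⟩
  intro x
  funext k
  -- rewrite both matrix-vector products as sums over pairs
  have hmul : ∀ row : Fin (d + 1) → Fin (d + 1) → Fin ((d + 2) * (d + 1) / 2) → ℝ,
      Matrix.mulVec (fun (k' : Fin ((d + 2) * (d + 1) / 2)) (c : Fin ((d + 2) * (d + 1) / 2)) =>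
          ∑ p : Fin (d + 1) × Fin (d + 1),
          if p.1 ≤ p.2 ∧ pairEnc d p.1 p.2 = (k' : ℕ) then row p.1 p.2 c else 0)
        (embedIn d ((d + 2) * (d + 1) / 2) x) k
      = ∑ p : Fin (d + 1) × Fin (d + 1),
          if p.1 ≤ p.2 ∧ pairEnc d p.1 p.2 = (k : ℕ)
            then (∑ c : Fin ((d + 2) * (d + 1) / 2),
                row p.1 p.2 c * embedIn d ((d + 2) * (d + 1) / 2) x c) else 0 := by
    intro row
    simp only [Matrix.mulVec, dotProduct, Finset.sum_mul, ite_mul, zero_mul]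
    rw [Finset.sum_comm]
    refine Finset.sum_congr rfl fun p _ => ?_
    split
    · rfl
    · exact Finset.sum_const_zero
  rw [hmul rowA', hmul rowB']
  simp only [qfeat]
  rw [← Finset.sum_filter, ← Finset.sum_filter, ← Finset.sum_filter]
  set S := Finset.univ.filter
      (fun p : Fin (d + 1) × Fin (d + 1) =>
        p.1 ≤ p.2 ∧ pairEnc d p.1 p.2 = (k : ℕ)) with hSdef
  have huniq : ∀ p ∈ S, ∀ q ∈ S, p = q := by
    intro p hp q hq
    simp only [hSdef, Finset.mem_filter, Finset.mem_univ, true_and] at hp hq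
    have h1 := pairEnc_inj (d := d) (Fin.le_def.mp hp.1)
      (by have := p.2.isLt; omega) (Fin.le_def.mp hq.1)
      (by have := q.2.isLt; omega) (hp.2.trans hq.2.symm)
    exact Prod.ext (Fin.ext h1.1) (Fin.ext h1.2)
  rcases S.eq_empty_or_nonempty with hSe | ⟨p0, hp0⟩
  · rw [hSe]
    simp only [Finset.sum_empty, mul_zero, zero_mul]
    have hk : ¬ (k : ℕ) ≤ d := by
      intro hle
      have hmem : ((⟨0, by omega⟩ : Fin (d + 1)), (⟨(k : ℕ), by omega⟩ : Fin (d + 1))) ∈ S := by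
        simp only [hSdef, Finset.mem_filter, Finset.mem_univ, true_and]
        refine ⟨Fin.mk_le_mk.mpr (Nat.zero_le _), ?_⟩
        simpa using pairEnc_zero d (k : ℕ)
      rw [hSe] at hmem
      exact absurd hmem (Finset.notMem_empty _)
    have hk0 : ¬ (k : ℕ) = 0 := by omega
    simp [embedIn, hk, hk0]
  · have hSs : S = {p0} := Finset.eq_singleton_iff_unique_mem.2
      ⟨hp0, fun q hq => huniq q hq p0 hp0⟩
    obtain ⟨i, j⟩ := p0
    rw [hSs]
    simp only [Finset.sum_singleton]
    simp only [hSdef, Finset.mem_filter, Finset.mem_univ, true_and] at hp0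
    obtain ⟨hij, hk⟩ := hp0
    have hijn : (i : ℕ) ≤ (j : ℕ) := Fin.le_def.mp hij
    by_cases h0 : (i : ℕ) = 0
    · have hA : (∑ c : Fin ((d + 2) * (d + 1) / 2),
          rowA' i j c * embedIn d ((d + 2) * (d + 1) / 2) x c) = 0 := by
        simp [hrA, rowA_zero _ _ _ _ _ h0]
      have hB : (∑ c : Fin ((d + 2) * (d + 1) / 2),
          rowB' i j c * embedIn d ((d + 2) * (d + 1) / 2) x c) = 0 := by
        simp [hrB, rowB_zero _ _ _ _ _ h0]
      rw [hA, hB]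
      rw [h0, pairEnc_zero] at hk
      by_cases hj : (j : ℕ) = 0
      · have hk0 : (k : ℕ) = 0 := by omega
        simp [qval, embedIn, h0, hj, hk0]
      · have hk0 : ¬ (k : ℕ) = 0 := by omega
        have hkd : (k : ℕ) ≤ d := by have := j.isLt; omega
        simp only [embedIn, qval, dif_neg hk0, dif_pos hkd, dif_pos h0, dif_neg hj,
          zero_mul, mul_zero, add_zero]
        congr 1
        simp only [Fin.mk.injEq]
        omega
    · have hj0 : (j : ℕ) ≠ 0 := by omega
      have hA := dotA d x i j h0
      have hB := dotB d x i j h0 hj0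
      rw [hrA] at *
      rw [hrB] at *
      rw [hA, hB]
      have hgt : d < pairEnc d (i : ℕ) (j : ℕ) :=
        pairEnc_gt (by omega) hijn (by have := j.isLt; omega)
      have hkd : ¬ (k : ℕ) ≤ d := by omega
      have hk0 : ¬ (k : ℕ) = 0 := by omega
      by_cases he : i = j
      · subst he
        simp only [embedIn, dif_neg hk0, dif_neg hkd, if_pos rfl, qval, dif_neg h0, dif_pos rfl]
        norm_num
        try ring
      · have hne : ¬ (i : ℕ) = (j : ℕ) := fun h => he (Fin.ext h)
        simp only [embedIn, dif_neg hk0, dif_neg hkd, if_neg he, qval, dif_neg h0, dif_neg hne]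
        norm_num
        try ring
end
end

section
/- Let H be a real inner product space, let v_1, …, v_m ∈ H be orthonormal, let g_1, …, g_D ∈ H, and let w ∈ ℝ^m. Define u_k ∈ ℝ^m by u_k[j] = ⟨v_j, g_k⟩ for k = 1, …, D, and let P be the orthogonal projection of ℝ^m onto span{u_1, …, u_D}. Then inf_{β ∈ ℝ^D} ‖Σ_{j=1}^m w_j·v_j + Σ_{k=1}^D β_k·g_k‖² ≥ ‖w − P·w‖². -/
/-!
For `x = Σ_j w_j v_j + Σ_k β_k g_k`, the coefficient vector `(⟪v_j, x⟫)_j` equals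
`w + Σ_k β_k u_k`. Its norm is at most `‖x‖` by Bessel's inequality, and at least the distance
`‖w - P w‖` from `w` to `span{u_k}`, because `-Σ_k β_k u_k` lies in that span.
-/

open scoped InnerProductSpace

namespace Submodule

variable {𝕜 E : Type*} [RCLike 𝕜] [NormedAddCommGroup E] [InnerProductSpace 𝕜 E]

theorem norm_sub_starProjection_le (U : Submodule 𝕜 E) [U.HasOrthogonalProjection] (y : E)
    {x : E} (hx : x ∈ U) : ‖y - U.starProjection y‖ ≤ ‖y - x‖ := by
  rw [starProjection_minimal]
  exact ciInf_le ⟨0, Set.forall_mem_range.2 fun _ => norm_nonneg _⟩ (⟨x, hx⟩ : U)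

end Submodule

namespace Orthonormal

variable {𝕜 E ι κ : Type*} [RCLike 𝕜] [NormedAddCommGroup E] [InnerProductSpace 𝕜 E]
  [Fintype ι] {v : ι → E}

theorem norm_toLp_inner_sq_le (hv : Orthonormal 𝕜 v) (x : E) :
    ‖WithLp.toLp 2 (fun i => ⟪v i, x⟫_𝕜)‖ ^ 2 ≤ ‖x‖ ^ 2 := by
  rw [EuclideanSpace.norm_sq_eq]
  exact hv.sum_inner_products_le x

theorem toLp_inner_sum_smul_add_sum_smul [Fintype κ] (hv : Orthonormal 𝕜 v) {g : κ → E}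
    {u : κ → EuclideanSpace 𝕜 ι} (hu : ∀ k i, u k i = ⟪v i, g k⟫_𝕜)
    (w : EuclideanSpace 𝕜 ι) (β : κ → 𝕜) :
    WithLp.toLp 2 (fun i => ⟪v i, (∑ j, w j • v j) + ∑ k, β k • g k⟫_𝕜)
      = w + ∑ k, β k • u k := by
  ext i
  simp [inner_add_right, inner_sum, inner_smul_right, hv.inner_right_fintype, hu]

end Orthonormal

/-- for orthonormal `v_1, …, v_m` in a real inner product space `H`,
arbitrary `g_1, …, g_D ∈ H` and `w ∈ ℝ^m`, with `u_k = (⟨v_j, g_k⟩)_j ∈ ℝ^m` and `P`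
the (Euclidean) orthogonal projection onto `span{u_1, …, u_D}`, we have
`inf_β ‖Σ_j w_j v_j + Σ_k β_k g_k‖² ≥ ‖w - P w‖²`. -/
theorem stmt10 {H : Type*} [NormedAddCommGroup H] [InnerProductSpace ℝ H]
    (m D : ℕ) (v : Fin m → H) (hv : Orthonormal ℝ v) (g : Fin D → H)
    (w : EuclideanSpace ℝ (Fin m)) (u : Fin D → EuclideanSpace ℝ (Fin m))
    (hu : ∀ k j, u k j = (inner ℝ (v j) (g k) : ℝ)) :
    ‖w - (Submodule.orthogonalProjection (Submodule.span ℝ (Set.range u)) w :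
        EuclideanSpace ℝ (Fin m))‖ ^ 2
      ≤ ⨅ β : Fin D → ℝ, ‖(∑ j, w j • v j) + ∑ k, β k • g k‖ ^ 2 := by
  set U := Submodule.span ℝ (Set.range u)
  refine le_ciInf fun β => ?_
  have hmem : -∑ k, β k • u k ∈ U :=
    U.neg_mem <| U.sum_mem fun k _ => U.smul_mem _ (Submodule.subset_span ⟨k, rfl⟩)
  calc ‖w - U.starProjection w‖ ^ 2
      ≤ ‖w - -∑ k, β k • u k‖ ^ 2 :=
        pow_le_pow_left₀ (norm_nonneg _) (U.norm_sub_starProjection_le w hmem) 2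
    _ = ‖WithLp.toLp 2 (fun j => ⟪v j, (∑ j, w j • v j) + ∑ k, β k • g k⟫_ℝ)‖ ^ 2 := by
        rw [sub_neg_eq_add, hv.toLp_inner_sum_smul_add_sum_smul hu]
    _ ≤ ‖(∑ j, w j • v j) + ∑ k, β k • g k‖ ^ 2 := hv.norm_toLp_inner_sq_le _
end

section
/- Let d ≥ 1 and let S ∈ ℝ^{(d+1)×(d+1)} be the symmetric matrix with entries S[0,0] = d+1, S[0,j] = S[j,0] = 1 for 1 ≤ j ≤ d, S[j,j] = 2 for 1 ≤ j ≤ d, and all other entries zero (rows and columns indexed 0, 1, …, d). Then the characteristic polynomial of S is (X − (d+2))·(X − 1)·(X − 2)^{d−1}; equivalently, the eigenvalues of S are d+2 and 1 (each with multiplicity one) and 2 (with multiplicity d−1). In particular the smallest eigenvalue of S is 1, so S − I is positive semidefinite. -/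
open Matrix Polynomial

noncomputable section

/-- The matrix `S` with `S[0,0] = d+1`, `S[0,j] = S[j,0] = 1` and `S[j,j] = 2` for
`1 ≤ j ≤ d`, and all other entries zero. -/
def Smat (d : ℕ) : Matrix (Fin (d + 1)) (Fin (d + 1)) ℝ :=
  Matrix.of fun i j =>
    if i = 0 ∧ j = 0 then (d : ℝ) + 1
    else if i = 0 ∨ j = 0 then 1
    else if i = j then 2
    else 0

namespace Aux
variable {d : ℕ}

lemma c00 : charmatrix (Smat d) 0 0 = X - C ((d:ℝ)+1) := by
  rw [charmatrix_apply_eq]; simp [Smat]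

lemma c0j {j : Fin (d+1)} (hj : j ≠ 0) : charmatrix (Smat d) 0 j = -1 := by
  rw [charmatrix_apply_ne _ _ _ (Ne.symm hj)]; simp [Smat, hj]

lemma cj0 {i : Fin (d+1)} (hi : i ≠ 0) : charmatrix (Smat d) i 0 = -1 := by
  rw [charmatrix_apply_ne _ _ _ hi]; simp [Smat, hi]

lemma cdiag {i : Fin (d+1)} (hi : i ≠ 0) : charmatrix (Smat d) i i = X - C 2 := by
  rw [charmatrix_apply_eq]; simp [Smat, hi]

lemma coff {i j : Fin (d+1)} (hi : i ≠ 0) (hj : j ≠ 0) (hij : i ≠ j) :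
    charmatrix (Smat d) i j = 0 := by
  rw [charmatrix_apply_ne _ _ _ hij]; simp [Smat, hi, hj, hij]

end Aux

namespace Aux

def Emat (d : ℕ) : Matrix (Fin (d+1)) (Fin (d+1)) ℝ[X] :=
  Matrix.of fun i j =>
    if i = 0 then (if j = 0 then X - C 2 else 1)
    else if i = j then 1 else 0

def Mmat (d : ℕ) : Matrix (Fin (d+1)) (Fin (d+1)) ℝ[X] :=
  Matrix.of fun i j =>
    if i = 0 then (if j = 0 then (X - C 2) * (X - C ((d:ℝ)+1)) - C (d:ℝ) else 0)
    else if j = 0 then -1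
    else if i = j then X - C 2 else 0

lemma card_erase : (Finset.univ.erase (0 : Fin (d+1))).card = d := by
  rw [Finset.card_erase_of_mem (Finset.mem_univ _)]; simp

lemma mul_eq : Emat d * charmatrix (Smat d) = Mmat d := by
  ext i j : 2
  rw [Matrix.mul_apply, ← Finset.add_sum_erase Finset.univ _ (Finset.mem_univ (0 : Fin (d+1)))]
  by_cases hi : i = 0
  · subst hi
    by_cases hj : j = 0
    · subst hj
      have h1 : ∀ k ∈ Finset.univ.erase (0 : Fin (d+1)),
          Emat d 0 k * charmatrix (Smat d) k 0 = -1 := by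
        intro k hk
        have hk0 : k ≠ 0 := Finset.ne_of_mem_erase hk
        rw [cj0 hk0]
        simp [Emat, hk0]
      rw [Finset.sum_congr rfl h1, Finset.sum_const, card_erase, c00]
      simp only [Emat, Mmat, Matrix.of_apply, reduceIte]
      rw [nsmul_eq_mul, ← Polynomial.C_eq_natCast]
      ring_nf
    · have h1 : ∀ k ∈ Finset.univ.erase (0 : Fin (d+1)),
          Emat d 0 k * charmatrix (Smat d) k j = if k = j then X - C 2 else 0 := by
        intro k hk
        have hk0 : k ≠ 0 := Finset.ne_of_mem_erase hk
        by_cases hkj : k = j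
        · subst hkj; rw [cdiag hk0]; simp [Emat, hk0]
        · rw [coff hk0 hj hkj]; simp [Emat, hkj]
      rw [Finset.sum_congr rfl h1, Finset.sum_ite_eq' _ j,
        if_pos (Finset.mem_erase.2 ⟨hj, Finset.mem_univ _⟩), c0j hj]
      simp [Emat, Mmat, hj]
  · have h0 : Emat d i 0 * charmatrix (Smat d) 0 j = 0 := by simp [Emat, hi]
    have h1 : ∀ k ∈ Finset.univ.erase (0 : Fin (d+1)),
        Emat d i k * charmatrix (Smat d) k j
          = if k = i then charmatrix (Smat d) i j else 0 := by
      intro k hk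
      by_cases hki : k = i
      · subst hki; simp [Emat, hi]
      · have hik : i ≠ k := fun h => hki h.symm
        simp [Emat, hi, hik, hki]
    rw [h0, Finset.sum_congr rfl h1, Finset.sum_ite_eq' _ i,
      if_pos (Finset.mem_erase.2 ⟨hi, Finset.mem_univ _⟩), zero_add]
    by_cases hj : j = 0
    · subst hj; rw [cj0 hi]; simp [Mmat, hi]
    · by_cases hij : i = j
      · subst hij; rw [cdiag hi]; simp [Mmat, hi, hj]
      · rw [coff hi hj hij]; simp [Mmat, hi, hj, hij]

end Aux

namespace Aux

lemma detE : (Emat d).det = X - C 2 := by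
  rw [Matrix.det_of_upperTriangular (M := Emat d)]
  · have h : ∀ i : Fin (d+1), Emat d i i = if i = 0 then X - C 2 else 1 := by
      intro i; by_cases hi : i = 0 <;> simp [Emat, hi]
    rw [Finset.prod_congr rfl (fun i _ => h i)]
    rw [Finset.prod_ite_eq' Finset.univ (0 : Fin (d+1)) (fun _ => X - C 2)]
    simp
  · intro i j hij
    have hi : i ≠ 0 := Fin.pos_iff_ne_zero.mp (lt_of_le_of_lt (Fin.zero_le j) hij)
    have hij' : i ≠ j := fun h => absurd hij (by simp [h])
    simp [Emat, hi, hij']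

lemma detM : (Mmat d).det
    = ((X - C 2) * (X - C ((d:ℝ)+1)) - C (d:ℝ)) * (X - C 2) ^ d := by
  rw [Matrix.det_of_lowerTriangular]
  · have hdiag : ∀ i : Fin (d+1), Mmat d i i
        = if i = 0 then ((X - C 2) * (X - C ((d:ℝ)+1)) - C (d:ℝ)) else X - C 2 := by
      intro i; by_cases hi : i = 0 <;> simp [Mmat, hi]
    rw [Finset.prod_congr rfl fun i _ => hdiag i,
      ← Finset.mul_prod_erase Finset.univ _ (Finset.mem_univ (0 : Fin (d+1))), if_pos rfl]
    congr 1
    rw [Finset.prod_congr rfl (fun i hi => if_neg (Finset.ne_of_mem_erase hi)),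
      Finset.prod_const, card_erase]
  · intro i j hij
    have h : i < j := hij
    have hj : j ≠ 0 := by
      intro hj0; subst hj0; exact Fin.not_lt_zero i h
    by_cases hi : i = 0 <;> simp [Mmat, hi, hj, h.ne]

lemma charpoly_eq (hd : 1 ≤ d) :
    (Smat d).charpoly = (X - C ((d:ℝ) + 2)) * (X - C 1) * (X - C 2) ^ (d - 1) := by
  have key : (Emat d).det * (charmatrix (Smat d)).det
      = ((X - C 2) * (X - C ((d:ℝ)+1)) - C (d:ℝ)) * (X - C 2) ^ d := by
    rw [← Matrix.det_mul, mul_eq, detM]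
  rw [detE, ← Matrix.charpoly] at key
  apply mul_left_cancel₀ (Polynomial.X_sub_C_ne_zero (2:ℝ))
  rw [key]
  obtain ⟨e, rfl⟩ : ∃ e, d = e + 1 := ⟨d - 1, (Nat.succ_pred_eq_of_pos hd).symm⟩
  simp only [Nat.add_sub_cancel]
  push_cast
  simp only [C_add, C_1, map_ofNat, pow_succ]
  ring

end Aux

namespace Aux

def Bmat (d : ℕ) : Matrix (Fin d) (Fin (d+1)) ℝ :=
  Matrix.of fun j i => if i = 0 ∨ i = j.succ then 1 else 0

lemma BtB : (Bmat d)ᴴ * Bmat d = Smat d - 1 := by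
  ext i k
  rw [Matrix.mul_apply]
  simp only [Matrix.conjTranspose_apply, star_trivial]
  by_cases hi : i = 0
  · subst hi
    by_cases hk : k = 0
    · subst hk
      simp [Bmat, Smat]
    · have hsum : ∀ j : Fin d, Bmat d j 0 * Bmat d j k
          = if k.pred hk = j then 1 else 0 := by
        intro j
        by_cases hkj : k = j.succ
        · rw [if_pos (by simp [hkj])]
          simp [Bmat, hkj]
        · rw [if_neg (by intro h; exact hkj (by rw [← h, Fin.succ_pred]))]
          simp [Bmat, hkj, hk]
      rw [Finset.sum_congr rfl fun j _ => hsum j, Finset.sum_ite_eq _ (k.pred hk)]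
      simp [Smat, hk, Ne.symm hk]
  · by_cases hk : k = 0
    · subst hk
      have hsum : ∀ j : Fin d, Bmat d j i * Bmat d j 0
          = if i.pred hi = j then 1 else 0 := by
        intro j
        by_cases hij : i = j.succ
        · rw [if_pos (by simp [hij])]
          simp [Bmat, hij]
        · rw [if_neg (by intro h; exact hij (by rw [← h, Fin.succ_pred]))]
          simp [Bmat, hij, hi]
      rw [Finset.sum_congr rfl fun j _ => hsum j, Finset.sum_ite_eq _ (i.pred hi)]
      simp [Smat, hi]
    · by_cases hik : i = k
      · subst hik
        have hsum : ∀ j : Fin d, Bmat d j i * Bmat d j i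
            = if i.pred hi = j then 1 else 0 := by
          intro j
          by_cases hij : i = j.succ
          · rw [if_pos (by simp [hij])]
            simp [Bmat, hij]
          · rw [if_neg (by intro h; exact hij (by rw [← h, Fin.succ_pred]))]
            simp [Bmat, hij, hi]
        rw [Finset.sum_congr rfl fun j _ => hsum j, Finset.sum_ite_eq _ (i.pred hi)]
        simp [Smat, hi]
        norm_num
      · have hsum : ∀ j : Fin d, Bmat d j i * Bmat d j k = 0 := by
          intro j
          by_cases hij : i = j.succ
          · have hkj : k ≠ j.succ := fun h => hik (by rw [hij, h])
            simp [Bmat, hi, hk, hij, hkj]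
          · simp [Bmat, hi, hij]
        rw [Finset.sum_congr rfl fun j _ => hsum j, Finset.sum_const_zero]
        simp [Smat, hi, hk, hik]

lemma posSemidef : (Smat d - 1).PosSemidef := by
  rw [← BtB]
  exact Matrix.posSemidef_conjTranspose_mul_self _

lemma det_zero (hd : 1 ≤ d) : (Smat d - 1).det = 0 := by
  rw [← Matrix.exists_mulVec_eq_zero_iff]
  refine ⟨(fun i => if i = 0 then 1 else -1), ?_, ?_⟩
  · intro h
    have := congrFun h 0
    simp at this
  · funext i
    rw [Matrix.mulVec, dotProduct,
      ← Finset.add_sum_erase Finset.univ _ (Finset.mem_univ (0 : Fin (d+1)))]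
    by_cases hi : i = 0
    · subst hi
      have h1 : ∀ k ∈ Finset.univ.erase (0 : Fin (d+1)),
          (Smat d - 1) 0 k * (if k = 0 then (1:ℝ) else -1) = -1 := by
        intro k hk
        have hk0 : k ≠ 0 := Finset.ne_of_mem_erase hk
        simp [Smat, Matrix.sub_apply, Matrix.one_apply, hk0, Ne.symm hk0]
      rw [Finset.sum_congr rfl h1, Finset.sum_const, card_erase]
      simp [Smat, Matrix.sub_apply, Matrix.one_apply]
    · have h1 : ∀ k ∈ Finset.univ.erase (0 : Fin (d+1)),
          (Smat d - 1) i k * (if k = 0 then (1:ℝ) else -1)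
            = if k = i then -1 else 0 := by
        intro k hk
        have hk0 : k ≠ 0 := Finset.ne_of_mem_erase hk
        by_cases hki : k = i
        · subst hki; simp [Smat, Matrix.sub_apply, Matrix.one_apply, hk0]; norm_num
        · have hik : i ≠ k := fun h => hki h.symm
          simp [Smat, Matrix.sub_apply, Matrix.one_apply, hk0, hi, hki, hik]
      rw [Finset.sum_congr rfl h1, Finset.sum_ite_eq' _ i,
        if_pos (Finset.mem_erase.2 ⟨hi, Finset.mem_univ _⟩)]
      simp [Smat, Matrix.sub_apply, Matrix.one_apply, hi, Ne.symm hi]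

end Aux

/-- the characteristic polynomial of `S` is
`(X - (d+2))(X - 1)(X - 2)^{d-1}`; in particular the smallest eigenvalue of `S` is `1`
(so `S - I` is positive semidefinite and singular). -/
theorem stmt14 (d : ℕ) (hd : 1 ≤ d) :
    (Smat d).charpoly
        = (X - C ((d : ℝ) + 2)) * (X - C 1) * (X - C 2) ^ (d - 1)
      ∧ (Smat d - 1).PosSemidef ∧ (Smat d - 1).det = 0 := by
  exact ⟨Aux.charpoly_eq hd, Aux.posSemidef, Aux.det_zero hd⟩
end
end

section
/- Let d ≥ 1, D = 2d+1, and j, k ∈ {1, …, d}. Define W₀, W₁ ∈ ℝ^{D×D} (rows/columns indexed 1, …, 2d+1) as follows: all entries are zero except that the block of W₀ with rows d+2, …, 2d+1 and columns 2, …, d+1 equals I_d, and the block of W₁ with rows d+2, …, 2d+1 and columns 2, …, d+1 has every row equal to e_kᵀ − e_jᵀ (where e_j, e_k are standard basis vectors of ℝ^d). Then for every x ∈ ℝ^d, the vector z = (1, x, x[j]·x) ∈ ℝ^{2d+1} satisfies z + (W₀·z) ⊙ (W₁·z) = (1, x, x[k]·x), where ⊙ denotes the entrywise product. Likewise, with W₁'s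 block having every row equal to e_kᵀ, the vector z = (1, x, 0_d) satisfies z + (W₀·z) ⊙ (W₁·z) = (1, x, x[k]·x). -/
open Matrix

noncomputable section

/-- `W₀`: all zero except for an identity block `I_d` in rows `d+1, …, 2d` and columns
`1, …, d` (0-indexed). -/
def W0s (d : ℕ) : Matrix (Fin (2 * d + 1)) (Fin (2 * d + 1)) ℝ :=
  Matrix.of fun r c =>
    if d + 1 ≤ (r : ℕ) ∧ 1 ≤ (c : ℕ) ∧ (c : ℕ) ≤ d ∧ (r : ℕ) - (d + 1) = (c : ℕ) - 1 then 1
    else 0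

/-- `W₁`: all zero except that, in the block of rows `d+1, …, 2d` and columns `1, …, d`
(0-indexed), every row equals `e_kᵀ - e_jᵀ`. -/
def W1s (d : ℕ) (j k : Fin d) : Matrix (Fin (2 * d + 1)) (Fin (2 * d + 1)) ℝ :=
  Matrix.of fun r c =>
    if d + 1 ≤ (r : ℕ) ∧ 1 ≤ (c : ℕ) ∧ (c : ℕ) ≤ d then
      (if (c : ℕ) - 1 = (k : ℕ) then 1 else 0) - (if (c : ℕ) - 1 = (j : ℕ) then 1 else 0)
    else 0

/-- `W₁'`: all zero except that, in the block of rows `d+1, …, 2d` and columns `1, …, d`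
(0-indexed), every row equals `e_kᵀ`. -/
def W1s' (d : ℕ) (k : Fin d) : Matrix (Fin (2 * d + 1)) (Fin (2 * d + 1)) ℝ :=
  Matrix.of fun r c =>
    if d + 1 ≤ (r : ℕ) ∧ 1 ≤ (c : ℕ) ∧ (c : ℕ) ≤ d then
      (if (c : ℕ) - 1 = (k : ℕ) then 1 else 0)
    else 0

/-- The vector `(1, x, a) ∈ ℝ^{2d+1}`. -/
def zvec (d : ℕ) (x a : Fin d → ℝ) (r : Fin (2 * d + 1)) : ℝ :=
  if h0 : (r : ℕ) = 0 then 1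
  else if h1 : (r : ℕ) ≤ d then x ⟨(r : ℕ) - 1, by omega⟩
  else a ⟨(r : ℕ) - d - 1, by have := r.isLt; omega⟩

lemma W0_mulVec_lo (d : ℕ) (z : Fin (2*d+1) → ℝ) (r : Fin (2*d+1)) (h : ¬ d + 1 ≤ (r:ℕ)) :
    (W0s d).mulVec z r = 0 := by
  unfold Matrix.mulVec dotProduct
  apply Finset.sum_eq_zero
  intro c _
  have : W0s d r c = 0 := by
    simp only [W0s, Matrix.of_apply]
    rw [if_neg]; rintro ⟨h1, -⟩; exact h h1
  simp [this]

lemma W0_mulVec_hi (d : ℕ) (z : Fin (2*d+1) → ℝ) (r : Fin (2*d+1)) (h : d + 1 ≤ (r:ℕ)) :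
    (W0s d).mulVec z r = z ⟨(r:ℕ) - d, by have := r.isLt; omega⟩ := by
  have hr := r.isLt
  have hent : ∀ c : Fin (2*d+1),
      W0s d r c = if c = (⟨(r:ℕ)-d, by omega⟩ : Fin (2*d+1)) then 1 else 0 := by
    intro c
    have hc := c.isLt
    simp only [W0s, Matrix.of_apply, Fin.ext_iff]
    split_ifs <;> try norm_num
    all_goals omega
  unfold Matrix.mulVec dotProduct
  simp [hent, ite_mul]

lemma W1_mulVec (d : ℕ) (j k : Fin d) (z : Fin (2*d+1) → ℝ) (r : Fin (2*d+1))
    (h : d + 1 ≤ (r:ℕ)) :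
    (W1s d j k).mulVec z r
      = z ⟨(k:ℕ)+1, by have := k.isLt; omega⟩ - z ⟨(j:ℕ)+1, by have := j.isLt; omega⟩ := by
  have hk := k.isLt; have hj := j.isLt
  have hent : ∀ c : Fin (2*d+1), W1s d j k r c
      = (if c = (⟨(k:ℕ)+1, by omega⟩ : Fin (2*d+1)) then 1 else 0)
        - (if c = (⟨(j:ℕ)+1, by omega⟩ : Fin (2*d+1)) then 1 else 0) := by
    intro c
    have hc := c.isLt
    simp only [W1s, Matrix.of_apply, Fin.ext_iff]
    split_ifs <;> try norm_num
    all_goals omega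
  unfold Matrix.mulVec dotProduct
  simp [hent, sub_mul, ite_mul, Finset.sum_sub_distrib]

lemma W1'_mulVec (d : ℕ) (k : Fin d) (z : Fin (2*d+1) → ℝ) (r : Fin (2*d+1))
    (h : d + 1 ≤ (r:ℕ)) :
    (W1s' d k).mulVec z r = z ⟨(k:ℕ)+1, by have := k.isLt; omega⟩ := by
  have hk := k.isLt
  have hent : ∀ c : Fin (2*d+1), W1s' d k r c
      = (if c = (⟨(k:ℕ)+1, by omega⟩ : Fin (2*d+1)) then 1 else 0) := by
    intro c
    have hc := c.isLt
    simp only [W1s', Matrix.of_apply, Fin.ext_iff]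
    split_ifs <;> try norm_num
    all_goals omega
  unfold Matrix.mulVec dotProduct
  simp [hent, ite_mul]

lemma zvec_at_mid (d : ℕ) (x a : Fin d → ℝ) (n : ℕ) (hn : n < 2*d+1)
    (h1 : 1 ≤ n) (h2 : n ≤ d) :
    zvec d x a ⟨n, hn⟩ = x ⟨n - 1, by omega⟩ := by
  unfold zvec
  rw [dif_neg (show ¬ n = 0 by omega), dif_pos (show n ≤ d from h2)]

lemma zvec_hi (d : ℕ) (x a : Fin d → ℝ) (r : Fin (2*d+1)) (h : d + 1 ≤ (r:ℕ)) :
    zvec d x a r = a ⟨(r:ℕ) - d - 1, by have := r.isLt; omega⟩ := by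
  unfold zvec
  rw [dif_neg (by omega), dif_neg (by omega)]

/-- one bilinear feed-forward step with the above weights replaces the
scratch features `x[j]·x` by `x[k]·x`:
`z + (W₀z) ⊙ (W₁z) = (1, x, x[k]·x)` for `z = (1, x, x[j]·x)`, and likewise
`z + (W₀z) ⊙ (W₁'z) = (1, x, x[k]·x)` for `z = (1, x, 0)`. -/
theorem stmt17 (d : ℕ) (hd : 1 ≤ d) (j k : Fin d) :
    (∀ x : Fin d → ℝ,
      (fun r => zvec d x (fun i => x j * x i) r
          + (W0s d).mulVec (zvec d x fun i => x j * x i) r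
            * (W1s d j k).mulVec (zvec d x fun i => x j * x i) r)
        = zvec d x fun i => x k * x i)
    ∧ (∀ x : Fin d → ℝ,
      (fun r => zvec d x 0 r
          + (W0s d).mulVec (zvec d x 0) r * (W1s' d k).mulVec (zvec d x 0) r)
        = zvec d x fun i => x k * x i) := by

  have hk := k.isLt; have hj := j.isLt
  constructor
  · intro x
    funext r
    have hr := r.isLt
    by_cases h : d + 1 ≤ (r:ℕ)
    · rw [W0_mulVec_hi d _ r h, W1_mulVec d j k _ r h,
        zvec_at_mid d x _ ((r:ℕ)-d) (by omega) (by omega) (by omega),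
        zvec_at_mid d x _ ((k:ℕ)+1) (by omega) (by omega) (by omega),
        zvec_at_mid d x _ ((j:ℕ)+1) (by omega) (by omega) (by omega),
        zvec_hi d x _ r h, zvec_hi d x _ r h]
      have e1 : x ⟨(k:ℕ)+1-1, by omega⟩ = x k := congrArg x (Fin.ext (by simp))
      have e2 : x ⟨(j:ℕ)+1-1, by omega⟩ = x j := congrArg x (Fin.ext (by simp))
      rw [e1, e2]
      ring
    · rw [W0_mulVec_lo d _ r h]
      unfold zvec
      rcases Nat.eq_zero_or_pos (r:ℕ) with h0 | h0
      · rw [dif_pos h0, dif_pos h0]; ring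
      · rw [dif_neg (show ¬ (r:ℕ) = 0 by omega), dif_neg (show ¬ (r:ℕ) = 0 by omega),
          dif_pos (show (r:ℕ) ≤ d by omega), dif_pos (show (r:ℕ) ≤ d by omega)]
        ring
  · intro x
    funext r
    have hr := r.isLt
    by_cases h : d + 1 ≤ (r:ℕ)
    · rw [W0_mulVec_hi d _ r h, W1'_mulVec d k _ r h,
        zvec_at_mid d x _ ((r:ℕ)-d) (by omega) (by omega) (by omega),
        zvec_at_mid d x _ ((k:ℕ)+1) (by omega) (by omega) (by omega),
        zvec_hi d x _ r h, zvec_hi d x _ r h]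
      have e1 : x ⟨(k:ℕ)+1-1, by omega⟩ = x k := congrArg x (Fin.ext (by simp))
      rw [e1]
      simp
      ring
    · rw [W0_mulVec_lo d _ r h]
      unfold zvec
      rcases Nat.eq_zero_or_pos (r:ℕ) with h0 | h0
      · rw [dif_pos h0, dif_pos h0]; ring
      · rw [dif_neg (show ¬ (r:ℕ) = 0 by omega), dif_neg (show ¬ (r:ℕ) = 0 by omega),
          dif_pos (show (r:ℕ) ≤ d by omega), dif_pos (show (r:ℕ) ≤ d by omega)]
        ring
end
end
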